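/- arXiv:0911.4196 — 8 statements merged into one kernel-verified Lean document; each statement's English description precedes it below -/
import Mathlib

section
/- Let (R, R ∩ 𝔪) be a pca subring of T and let c ∈ pT ∩ R. Then there exists a pca subring S of T such that R ⊆ S ⊆ T, c ∈ pS, and Γ(S) = Γ(R). -/
/-!
Write `c = p t` and let `A = R[t]`; since `p t ∈ R`, a power of `p` carries every element of
`A` into `R`. Let `S` consist of the fractions `a / b` with `a, b ∈ A` and `b` a unit of `T`.
Then `S` is quasilocal, and any two elements of `S` are carried into `R` by a common multiplier
`pⁿ b`, a nonzerodivisor of `T`. So an element of `S` lying in an associated prime, or in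
`((Qᵢ \ pT)S) ∩ S`, yields one of `R` doing so, hence vanishes. Counting fractions gives
`Γ(S) = Γ(A) = Γ(R)`.
-/

universe u

/-- `Γ(X) = max(|X|, ℵ₀)`. -/
noncomputable def Gamma (X : Type u) : Cardinal.{u} :=
  max (Cardinal.mk X) Cardinal.aleph0

/-- The set `(Q \ pT)R = {t ∈ T | t = qr for some q ∈ Q \ pT, r ∈ R}`. -/
def CompAvoid {T : Type u} [CommRing T] (Q : Ideal T) (p : T) (R : Set T) : Set T :=
  {t : T | ∃ q ∈ Q, q ∉ Ideal.span {p} ∧ ∃ r ∈ R, t = q * r}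

/-- `R` is quasilocal with maximal ideal `R ∩ 𝔪`: every element of `R` outside the
maximal ideal of `T` is a unit of `R`. -/
def QuasilocalWithMaxIdeal {T : Type u} [CommRing T] [IsLocalRing T] (R : Subring T) : Prop :=
  ∀ x : R, (x : T) ∉ IsLocalRing.maximalIdeal T → IsUnit x

/-- `R` is a `p`ca (`pT`-complement avoiding) subring of `T`:
`(R, R ∩ 𝔪)` is quasilocal, `p ∈ R`, `Γ(R) < |T|`, `R ∩ P = (0)` for every associated
prime `P` of `T`, and `((Qᵢ \ pT)R) ∩ R = {0}` for all `i`. -/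
def IsPcaSubring {T : Type u} [CommRing T] [IsLocalRing T] {k : ℕ}
    (Q : Fin k → Ideal T) (p : T) (R : Subring T) : Prop :=
  p ∈ R ∧ QuasilocalWithMaxIdeal R ∧
  Gamma ↥R < Cardinal.mk T ∧
  (∀ P ∈ associatedPrimes T T, ∀ x ∈ R, x ∈ P → x = 0) ∧
  (∀ i : Fin k, ∀ t ∈ CompAvoid (Q i) p (R : Set T), t ∈ R → t = 0)

open Cardinal

theorem Gamma_eq_of_injective {X Y : Type u} {f : X → Y} (hf : Function.Injective f)
    (hY : #Y ≤ Gamma X) : Gamma Y = Gamma X :=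
  le_antisymm (max_le hY (le_max_right _ _)) (max_le_max (mk_le_of_injective hf) le_rfl)

theorem Gamma_mul_self (X : Type u) : Gamma X * Gamma X = Gamma X :=
  mul_eq_self (le_max_right _ _)

namespace Subring

variable {T : Type u} [CommRing T]

def powSaturation (R : Subring T) {p : T} (hp : p ∈ R) : Subring T where
  carrier := {a | ∃ n : ℕ, p ^ n * a ∈ R}
  zero_mem' := ⟨0, by simp⟩
  one_mem' := ⟨0, by simp⟩
  add_mem' := by
    rintro a b ⟨m, ha⟩ ⟨n, hb⟩
    refine ⟨m + n, ?_⟩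
    have : p ^ (m + n) * (a + b) = p ^ n * (p ^ m * a) + p ^ m * (p ^ n * b) := by ring
    rw [this]
    exact add_mem (mul_mem (pow_mem hp n) ha) (mul_mem (pow_mem hp m) hb)
  mul_mem' := by
    rintro a b ⟨m, ha⟩ ⟨n, hb⟩
    refine ⟨m + n, ?_⟩
    have : p ^ (m + n) * (a * b) = (p ^ m * a) * (p ^ n * b) := by ring
    rw [this]
    exact mul_mem ha hb
  neg_mem' := by
    rintro a ⟨n, ha⟩
    exact ⟨n, by rw [mul_neg]; exact neg_mem ha⟩

theorem exists_pow_mul_mem_of_mem_powSaturation {R : Subring T} {p : T} (hp : p ∈ R) {a b : T}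
    (ha : a ∈ R.powSaturation hp) (hb : b ∈ R.powSaturation hp) :
    ∃ n : ℕ, p ^ n * a ∈ R ∧ p ^ n * b ∈ R := by
  obtain ⟨m, ha⟩ := ha
  obtain ⟨n, hb⟩ := hb
  refine ⟨m + n, ?_, ?_⟩
  · rw [pow_add, mul_comm (p ^ m), mul_assoc]
    exact mul_mem (pow_mem hp n) ha
  · rw [pow_add, mul_assoc]
    exact mul_mem (pow_mem hp m) hb

theorem adjoin_le_powSaturation {R : Subring T} {p : T} (hp : p ∈ R) {t : T} (ht : p * t ∈ R) :
    (Algebra.adjoin R {t}).toSubring ≤ R.powSaturation hp := by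
  rw [Algebra.adjoin_eq_ring_closure, closure_le]
  rintro _ (⟨r, rfl⟩ | rfl)
  · exact ⟨0, by rw [pow_zero, one_mul]; exact r.2⟩
  · exact ⟨1, by rwa [pow_one]⟩

/-- The fractions `a / b` with `a, b ∈ A` and `b` a unit of `T`. -/
def unitFractions (A : Subring T) : Subring T where
  carrier := {x | ∃ b ∈ A, IsUnit b ∧ x * b ∈ A}
  zero_mem' := ⟨1, one_mem A, isUnit_one, by simp⟩
  one_mem' := ⟨1, one_mem A, isUnit_one, by simp⟩
  add_mem' := by
    rintro x y ⟨b, hb, hbu, hxb⟩ ⟨c, hc, hcu, hyc⟩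
    refine ⟨b * c, mul_mem hb hc, hbu.mul hcu, ?_⟩
    have : (x + y) * (b * c) = x * b * c + y * c * b := by ring
    rw [this]
    exact add_mem (mul_mem hxb hc) (mul_mem hyc hb)
  mul_mem' := by
    rintro x y ⟨b, hb, hbu, hxb⟩ ⟨c, hc, hcu, hyc⟩
    refine ⟨b * c, mul_mem hb hc, hbu.mul hcu, ?_⟩
    have : x * y * (b * c) = x * b * (y * c) := by ring
    rw [this]
    exact mul_mem hxb hyc
  neg_mem' := by
    rintro x ⟨b, hb, hbu, hxb⟩
    exact ⟨b, hb, hbu, by rw [neg_mul]; exact neg_mem hxb⟩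

theorem le_unitFractions (A : Subring T) : A ≤ A.unitFractions :=
  fun a ha => ⟨1, one_mem A, isUnit_one, by rwa [mul_one]⟩

theorem exists_isUnit_mul_mem_of_mem_unitFractions {A : Subring T} {x y : T}
    (hx : x ∈ A.unitFractions) (hy : y ∈ A.unitFractions) :
    ∃ b ∈ A, IsUnit b ∧ x * b ∈ A ∧ y * b ∈ A := by
  obtain ⟨b, hb, hbu, hxb⟩ := hx
  obtain ⟨c, hc, hcu, hyc⟩ := hy
  refine ⟨b * c, mul_mem hb hc, hbu.mul hcu, ?_, ?_⟩
  · rw [← mul_assoc]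
    exact mul_mem hxb hc
  · rw [mul_comm b, ← mul_assoc]
    exact mul_mem hyc hb

theorem isUnit_of_isUnit_coe_unitFractions {A : Subring T} {x : A.unitFractions}
    (hx : IsUnit (x : T)) : IsUnit x := by
  obtain ⟨b, hb, hbu, hxb⟩ := x.2
  have hinv : ((hx.unit⁻¹ : Tˣ) : T) ∈ A.unitFractions :=
    ⟨x * b, hxb, hx.mul hbu, by rw [← mul_assoc, IsUnit.val_inv_mul, one_mul]; exact hb⟩
  exact IsUnit.of_mul_eq_one (⟨_, hinv⟩ : A.unitFractions) (Subtype.ext hx.mul_val_inv)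

theorem mk_unitFractions_le (A : Subring T) : #A.unitFractions ≤ #A * #A := by
  have hsub : (A.unitFractions : Set T) ⊆
      Set.range fun ab : A × A => (ab.1 : T) * Ring.inverse (ab.2 : T) := by
    rintro x ⟨b, hb, hbu, hxb⟩
    exact ⟨(⟨x * b, hxb⟩, ⟨b, hb⟩), by simp [mul_assoc, Ring.mul_inverse_cancel b hbu]⟩
  calc #A.unitFractions ≤ #(A × A) := (mk_le_mk_of_subset hsub).trans mk_range_le
    _ = #A * #A := by rw [mk_prod, lift_id]

end Subring

section

variable {T : Type u} [CommRing T] {R A : Subring T} {p : T} {hp : p ∈ R}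

theorem exists_mem_nonZeroDivisors_mul_mem (hpreg : p ∈ nonZeroDivisors T)
    (hA : A ≤ R.powSaturation hp) {x y : T} (hx : x ∈ A.unitFractions)
    (hy : y ∈ A.unitFractions) :
    ∃ m ∈ nonZeroDivisors T, m * x ∈ R ∧ m * y ∈ R := by
  obtain ⟨b, hb, hbu, hxb, hyb⟩ := Subring.exists_isUnit_mul_mem_of_mem_unitFractions hx hy
  obtain ⟨n, hxn, hyn⟩ := Subring.exists_pow_mul_mem_of_mem_powSaturation hp (hA hxb) (hA hyb)
  refine ⟨p ^ n * b, mul_mem (pow_mem hpreg n) hbu.mem_nonZeroDivisors, ?_, ?_⟩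
  · rwa [mul_assoc, mul_comm b]
  · rwa [mul_assoc, mul_comm b]

theorem eq_zero_of_mem_unitFractions_of_mem (hpreg : p ∈ nonZeroDivisors T)
    (hA : A ≤ R.powSaturation hp) {P : Ideal T} (hRP : ∀ x ∈ R, x ∈ P → x = 0)
    {x : T} (hx : x ∈ A.unitFractions) (hxP : x ∈ P) : x = 0 := by
  obtain ⟨m, hm, hmx, -⟩ := exists_mem_nonZeroDivisors_mul_mem hpreg hA hx hx
  exact (mem_nonZeroDivisors_iff_left.mp hm) x (hRP _ hmx (P.mul_mem_left m hxP))

theorem eq_zero_of_mem_compAvoid_unitFractions (hpreg : p ∈ nonZeroDivisors T)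
    (hA : A ≤ R.powSaturation hp) {Q : Ideal T}
    (hRQ : ∀ t ∈ CompAvoid Q p (R : Set T), t ∈ R → t = 0) {x : T}
    (hxQ : x ∈ CompAvoid Q p (A.unitFractions : Set T)) (hx : x ∈ A.unitFractions) : x = 0 := by
  obtain ⟨q, hq, hqp, s, hs, rfl⟩ := hxQ
  obtain ⟨m, hm, hms, hmx⟩ := exists_mem_nonZeroDivisors_mul_mem hpreg hA hs hx
  have hmx' : m * (q * s) = q * (m * s) := by ring
  exact (mem_nonZeroDivisors_iff_left.mp hm) _
    (hRQ _ ⟨q, hq, hqp, m * s, hms, hmx'⟩ hmx)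

end

theorem mk_adjoin_singleton_le_Gamma {T : Type u} [CommRing T] (R : Subring T) (t : T) :
    #(Algebra.adjoin R {t}) ≤ Gamma R := by
  refine (Algebra.cardinalMk_adjoin_le R {t}).trans (max_le (max_le (le_max_left _ _) ?_)
    (le_max_right _ _))
  rw [mk_singleton]
  exact one_le_aleph0.trans (le_max_right _ _)

theorem statement0_general {T : Type u} [CommRing T] [IsLocalRing T]
    {k : ℕ} (Q : Fin k → Ideal T)
    (p : T) (hpreg : p ∈ nonZeroDivisors T)
    (R : Subring T) (hR : IsPcaSubring Q p R)
    (c : T) (hcR : c ∈ R) (hcpT : c ∈ Ideal.span {p}) :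
    ∃ S : Subring T, IsPcaSubring Q p S ∧ R ≤ S ∧ (∃ s ∈ S, c = p * s) ∧
      Gamma ↥S = Gamma ↥R := by
  obtain ⟨hpR, -, hΓ, hP, hCA⟩ := hR
  obtain ⟨t, rfl⟩ := Ideal.mem_span_singleton.mp hcpT
  set A := (Algebra.adjoin R {t}).toSubring
  have hRA : R ≤ A := fun r hr => (Algebra.adjoin R {t}).algebraMap_mem ⟨r, hr⟩
  have hAS := A.le_unitFractions
  have hAsat := Subring.adjoin_le_powSaturation hpR hcR
  have hΓS : Gamma A.unitFractions = Gamma R := by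
    refine Gamma_eq_of_injective (Subring.inclusion_injective (hRA.trans hAS)) ?_
    calc #A.unitFractions ≤ #A * #A := A.mk_unitFractions_le
      _ ≤ Gamma R * Gamma R := mul_le_mul' (mk_adjoin_singleton_le_Gamma R t)
          (mk_adjoin_singleton_le_Gamma R t)
      _ = Gamma R := Gamma_mul_self R
  refine ⟨A.unitFractions, ⟨hAS (hRA hpR), ?_, hΓS ▸ hΓ, ?_, ?_⟩, hRA.trans hAS,
    ⟨t, hAS (Algebra.subset_adjoin rfl), rfl⟩, hΓS⟩
  · exact fun x hx =>
      Subring.isUnit_of_isUnit_coe_unitFractions (IsLocalRing.notMem_maximalIdeal.mp hx)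
  · exact fun P hP' _ => eq_zero_of_mem_unitFractions_of_mem hpreg hAsat (hP P hP')
  · exact fun i _ => eq_zero_of_mem_compAvoid_unitFractions hpreg hAsat (hCA i)

/-- **Lemma 3 (Claim 1).** If `R` is a `p`ca subring of `T` and `c ∈ pT ∩ R`, then there
is a `p`ca subring `S` with `R ⊆ S ⊆ T`, `c ∈ pS` and `Γ(S) = Γ(R)`. -/
theorem statement0 {T : Type u} [CommRing T] [IsLocalRing T] [IsNoetherianRing T]
    [IsAdicComplete (IsLocalRing.maximalIdeal T) T]
    {k : ℕ} (hk : 0 < k) (Q : Fin k → Ideal T)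
    (hQprime : ∀ i, (Q i).IsPrime)
    (hQnonmax : ∀ i, Q i ≠ IsLocalRing.maximalIdeal T)
    (hQinc : ∀ i j, Q i ≤ Q j → Q i = Q j)
    (p : T) (hp0 : p ≠ 0) (hpreg : p ∈ nonZeroDivisors T) (hpQ : ∀ i, p ∈ Q i)
    (R : Subring T) (hR : IsPcaSubring Q p R)
    (c : T) (hcR : c ∈ R) (hcpT : c ∈ Ideal.span {p}) :
    ∃ S : Subring T, IsPcaSubring Q p S ∧ R ≤ S ∧ (∃ s ∈ S, c = p * s) ∧
      Gamma ↥S = Gamma ↥R :=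
  statement0_general Q p hpreg R hR c hcR hcpT
end

section
/- Let Ω be a well-ordered set and let {R_α : α ∈ Ω} be a family of pca subrings of T such that R_α ⊆ R_β whenever α < β. Let S = ⋃_{α ∈ Ω} R_α. Then S ∩ P = (0) for every associated prime P of T, and ((Qᵢ \ pT)S) ∩ S = {0} for each i ∈ {1, …, k}. Furthermore, if Γ(R_α) ≤ λ for all α ∈ Ω, then Γ(S) ≤ λ·Γ(Ω); in particular, if Γ(Ω) ≤ λ and Γ(R_α) = λ for some α, then Γ(S) = λ. -/
universe u

/-! Each of the two conditions on the union concerns at most two of its elements (`t` and the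
factor `r`); since the chain is directed, they lie in a common member of it, where the
condition holds by hypothesis. The cardinal bound is the union bound
`#(⋃ Rα) ≤ #Ω · sup #Rα`. -/

open Cardinal

section CompAvoid

variable {T : Type u} [CommRing T] (Q : Ideal T) (p : T)

theorem compAvoid_mono {R R' : Set T} (h : R ⊆ R') : CompAvoid Q p R ⊆ CompAvoid Q p R' := by
  rintro t ⟨q, hq, hqp, r, hr, rfl⟩
  exact ⟨q, hq, hqp, r, h hr, rfl⟩

theorem compAvoid_iUnion {ι : Sort*} (R : ι → Set T) :
    CompAvoid Q p (⋃ i, R i) = ⋃ i, CompAvoid Q p (R i) := by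
  ext t
  simp only [CompAvoid, Set.mem_iUnion, Set.mem_ofPred_eq]
  constructor
  · rintro ⟨q, hq, hqp, r, ⟨i, hr⟩, rfl⟩
    exact ⟨i, q, hq, hqp, r, hr, rfl⟩
  · rintro ⟨i, q, hq, hqp, r, hr, rfl⟩
    exact ⟨q, hq, hqp, r, ⟨i, hr⟩, rfl⟩

theorem eq_zero_of_mem_compAvoid_iUnion_of_directed {ι : Sort*} {R : ι → Set T}
    (hR : Directed (· ⊆ ·) R) (h : ∀ i, ∀ t ∈ CompAvoid Q p (R i), t ∈ R i → t = 0) :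
    ∀ t ∈ CompAvoid Q p (⋃ i, R i), t ∈ ⋃ i, R i → t = 0 := by
  intro t ht ht'
  rw [compAvoid_iUnion, Set.mem_iUnion] at ht
  obtain ⟨i, hti⟩ := ht
  obtain ⟨j, htj⟩ := Set.mem_iUnion.mp ht'
  obtain ⟨l, hil, hjl⟩ := hR i j
  exact h l t (compAvoid_mono Q p hil hti) (hjl htj)

end CompAvoid

theorem aleph0_le_Gamma (X : Type u) : ℵ₀ ≤ Gamma X :=
  le_max_right _ _

theorem Gamma_ne_zero (X : Type u) : Gamma X ≠ 0 :=
  (aleph0_pos.trans_le (aleph0_le_Gamma X)).ne'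

theorem Gamma_mono {α : Type u} {s t : Set α} (h : s ⊆ t) : Gamma s ≤ Gamma t :=
  max_le_max (mk_le_mk_of_subset h) le_rfl

theorem Gamma_iUnion_le {α ι : Type u} {s : ι → Set α} {lam : Cardinal.{u}} (hlam : ℵ₀ ≤ lam)
    (hs : ∀ i, Gamma (s i) ≤ lam) : Gamma (⋃ i, s i) ≤ lam * Gamma ι := by
  refine max_le ?_ (hlam.trans (le_mul_right (Gamma_ne_zero ι)))
  calc #(⋃ i, s i) ≤ #ι * ⨆ i, #(s i) := mk_iUnion_le s
    _ ≤ Gamma ι * lam :=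
      mul_le_mul' (le_max_left _ _) (ciSup_le' fun i => (le_max_left _ _).trans (hs i))
    _ = lam * Gamma ι := mul_comm _ _

theorem statement1_general
    {T : Type u} [CommRing T] [IsLocalRing T]
    {k : ℕ} (Q : Fin k → Ideal T)
    (p : T)
    (Ω : Type u) [LinearOrder Ω]
    (Rfam : Ω → Subring T) (hpca : ∀ α : Ω, IsPcaSubring Q p (Rfam α))
    (hmono : ∀ α β : Ω, α < β → Rfam α ≤ Rfam β) :
    (∀ P ∈ associatedPrimes T T, ∀ x ∈ ⋃ α : Ω, (Rfam α : Set T), x ∈ P → x = 0) ∧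
    (∀ i : Fin k, ∀ t ∈ CompAvoid (Q i) p (⋃ α : Ω, (Rfam α : Set T)),
      t ∈ ⋃ α : Ω, (Rfam α : Set T) → t = 0) ∧
    (∀ lam : Cardinal.{u}, Cardinal.aleph0 ≤ lam → (∀ α : Ω, Gamma ↥(Rfam α) ≤ lam) →
      Gamma ↥(⋃ α : Ω, (Rfam α : Set T)) ≤ lam * Gamma Ω ∧
      (Gamma Ω ≤ lam → (∃ α : Ω, Gamma ↥(Rfam α) = lam) →
        Gamma ↥(⋃ α : Ω, (Rfam α : Set T)) = lam)) := by
  have hdir : Directed (· ⊆ ·) fun α => (Rfam α : Set T) :=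
    Monotone.directed_le (monotone_iff_forall_lt.mpr fun α β h => hmono α β h)
  refine ⟨?_, fun i => eq_zero_of_mem_compAvoid_iUnion_of_directed _ _ hdir
    fun α => (hpca α).2.2.2.2 i, fun lam hlam hle => ?_⟩
  · intro P hP x hx hxP
    obtain ⟨α, hxα⟩ := Set.mem_iUnion.mp hx
    exact (hpca α).2.2.2.1 P hP x hxα hxP
  have hbound := Gamma_iUnion_le hlam hle
  refine ⟨hbound, fun hΩ ⟨α, hα⟩ => le_antisymm ?_ ?_⟩
  · rwa [Cardinal.mul_eq_left hlam hΩ (Gamma_ne_zero Ω)] at hbound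
  · exact hα ▸ Gamma_mono (Set.subset_iUnion (fun β => (Rfam β : Set T)) α)

/-- **Lemma 4 (unions).** Conclusions about the union of a chain of `p`ca subrings
indexed by a well-ordered set. -/
theorem statement1
    {T : Type u} [CommRing T] [IsLocalRing T] [IsNoetherianRing T]
    [IsAdicComplete (IsLocalRing.maximalIdeal T) T]
    {k : ℕ} (hk : 0 < k) (Q : Fin k → Ideal T)
    (hQprime : ∀ i, (Q i).IsPrime)
    (hQnonmax : ∀ i, Q i ≠ IsLocalRing.maximalIdeal T)
    (hQinc : ∀ i j, Q i ≤ Q j → Q i = Q j)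
    (p : T) (hp0 : p ≠ 0) (hpreg : p ∈ nonZeroDivisors T) (hpQ : ∀ i, p ∈ Q i)
    (Ω : Type u) [LinearOrder Ω] [WellFoundedLT Ω]
    (Rfam : Ω → Subring T) (hpca : ∀ α : Ω, IsPcaSubring Q p (Rfam α))
    (hmono : ∀ α β : Ω, α < β → Rfam α ≤ Rfam β) :
    (∀ P ∈ associatedPrimes T T, ∀ x ∈ ⋃ α : Ω, (Rfam α : Set T), x ∈ P → x = 0) ∧
    (∀ i : Fin k, ∀ t ∈ CompAvoid (Q i) p (⋃ α : Ω, (Rfam α : Set T)),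
      t ∈ ⋃ α : Ω, (Rfam α : Set T) → t = 0) ∧
    (∀ lam : Cardinal.{u}, Cardinal.aleph0 ≤ lam → (∀ α : Ω, Gamma ↥(Rfam α) ≤ lam) →
      Gamma ↥(⋃ α : Ω, (Rfam α : Set T)) ≤ lam * Gamma Ω ∧
      (Gamma Ω ≤ lam → (∃ α : Ω, Gamma ↥(Rfam α) = lam) →
        Gamma ↥(⋃ α : Ω, (Rfam α : Set T)) = lam)) :=
  statement1_general Q p Ω Rfam hpca hmono
end

section
/- Let (R, R ∩ 𝔪) be a pca subring of T. Then there exists a pca subring S of T with Γ(S) = Γ(R) such that R ⊆ S ⊆ T and pT ∩ R ⊆ pS. -/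
/-!
Enlarge `R` in two steps, each by adjoining the fractions `x ∈ T` with `m * x ∈ R` for `m` in a
multiplicative set `M ⊆ R` of nonzerodivisors of `T`: first `M = {pⁿ}`, which makes every element
of `pT ∩ R` divisible by `p`, then `M = R ∩ Tˣ`, which makes the ring quasilocal. Clearing a
denominator `m` is injective on `T`, so such an enlargement keeps `Γ`, and any `x` in it with
`m * x = 0` vanishes; this is why the conditions on associated primes and on `(Qᵢ \ pT)R` persist.
-/

universe u

namespace Subring

variable {T : Type u} [CommRing T]

def fractions (R : Subring T) (M : Submonoid T) (hMR : M ≤ R.toSubmonoid) : Subring T where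
  carrier := {x | ∃ m ∈ M, m * x ∈ R}
  mul_mem' := by
    rintro x y ⟨m, hm, hmx⟩ ⟨n, hn, hny⟩
    exact ⟨m * n, M.mul_mem hm hn, by
      rw [show m * n * (x * y) = (m * x) * (n * y) by ring]; exact R.mul_mem hmx hny⟩
  one_mem' := ⟨1, M.one_mem, by simp⟩
  add_mem' := by
    rintro x y ⟨m, hm, hmx⟩ ⟨n, hn, hny⟩
    refine ⟨m * n, M.mul_mem hm hn, ?_⟩
    rw [show m * n * (x + y) = n * (m * x) + m * (n * y) by ring]
    exact R.add_mem (R.mul_mem (hMR hn) hmx) (R.mul_mem (hMR hm) hny)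
  zero_mem' := ⟨1, M.one_mem, by simp⟩
  neg_mem' := by
    rintro x ⟨m, hm, hmx⟩
    exact ⟨m, hm, by rw [mul_neg]; exact R.neg_mem hmx⟩

variable {R : Subring T} {M : Submonoid T} {hMR : M ≤ R.toSubmonoid}

theorem mem_fractions {x : T} : x ∈ R.fractions M hMR ↔ ∃ m ∈ M, m * x ∈ R := Iff.rfl

theorem le_fractions : R ≤ R.fractions M hMR :=
  fun x hx => ⟨1, M.one_mem, by rwa [one_mul]⟩

theorem gamma_fractions (hM : M ≤ nonZeroDivisors T) : Gamma (R.fractions M hMR) = Gamma R := by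
  refine le_antisymm (max_le ?_ (le_max_right _ _))
    (max_le_max_right _ (Cardinal.mk_le_mk_of_subset le_fractions))
  choose m hm hmx using fun x : R.fractions M hMR => mem_fractions.mp x.2
  have hinj : Function.Injective fun x => ((⟨m x, hMR (hm x)⟩ : R), (⟨m x * x, hmx x⟩ : R)) := by
    intro x y hxy
    simp only [Prod.mk.injEq, Subtype.mk.injEq] at hxy
    rw [hxy.1] at hxy
    exact Subtype.ext ((mul_cancel_left_mem_nonZeroDivisors (hM (hm y))).mp hxy.2)
  calc Cardinal.mk (R.fractions M hMR) ≤ Cardinal.mk R * Cardinal.mk R := by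
        simpa using Cardinal.mk_le_of_injective hinj
    _ ≤ Gamma R * Gamma R := mul_le_mul' (le_max_left _ _) (le_max_left _ _)
    _ = Gamma R := Cardinal.mul_eq_self (le_max_right _ _)

theorem fractions_inter_ideal_trivial (hM : M ≤ nonZeroDivisors T) {I : Ideal T}
    (h : ∀ x ∈ R, x ∈ I → x = 0) : ∀ x ∈ R.fractions M hMR, x ∈ I → x = 0 := by
  rintro x ⟨m, hm, hmx⟩ hxI
  exact (hM hm).1 x (h _ hmx (I.mul_mem_left m hxI))

theorem fractions_compAvoid_trivial (hM : M ≤ nonZeroDivisors T) {Q : Ideal T} {p : T}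
    (h : ∀ t ∈ CompAvoid Q p (R : Set T), t ∈ R → t = 0) :
    ∀ t ∈ CompAvoid Q p (R.fractions M hMR : Set T), t ∈ R.fractions M hMR → t = 0 := by
  rintro t ⟨q, hqQ, hqp, s, ⟨m, hm, hms⟩, rfl⟩ ⟨n, hn, hnt⟩
  have hmn : m * n ∈ nonZeroDivisors T := hM (M.mul_mem hm hn)
  have hcomp : m * n * (q * s) ∈ CompAvoid Q p (R : Set T) :=
    ⟨q, hqQ, hqp, n * (m * s), R.mul_mem (hMR hn) hms, by ring⟩
  have hmem : m * n * (q * s) ∈ R := by rw [mul_assoc]; exact R.mul_mem (hMR hm) hnt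
  exact hmn.1 _ (h _ hcomp hmem)

theorem quasilocal_fractions_units [IsLocalRing T] (R : Subring T) :
    QuasilocalWithMaxIdeal (R.fractions (R.toSubmonoid ⊓ IsUnit.submonoid T) inf_le_left) := by
  rintro ⟨x, u, ⟨huR, hu⟩, hux⟩ hx
  obtain ⟨x, rfl⟩ := IsLocalRing.notMem_maximalIdeal.mp hx
  have hu : IsUnit u := hu
  refine IsUnit.of_mul_eq_one ⟨x⁻¹.1, u * x, ⟨hux, hu.mul x.isUnit⟩, ?_⟩ (Subtype.ext (by simp))
  simpa [mul_assoc] using huR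

end Subring

theorem statement2_general
    {T : Type u} [CommRing T] [IsLocalRing T]
    {k : ℕ} (Q : Fin k → Ideal T)
    (p : T) (hpreg : p ∈ nonZeroDivisors T)
    (R : Subring T) (hR : IsPcaSubring Q p R) :
    ∃ S : Subring T, IsPcaSubring Q p S ∧ Gamma ↥S = Gamma ↥R ∧ R ≤ S ∧
      (∀ x ∈ R, x ∈ Ideal.span {p} → ∃ s ∈ S, x = p * s) := by
  obtain ⟨hpR, -, hRcard, hRass, hRavoid⟩ := hR
  set R' := R.fractions (Submonoid.powers p) (Submonoid.powers_le.mpr hpR)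
  set S := R'.fractions (R'.toSubmonoid ⊓ IsUnit.submonoid T) inf_le_left
  have hp : Submonoid.powers p ≤ nonZeroDivisors T := Submonoid.powers_le.mpr hpreg
  have hu : R'.toSubmonoid ⊓ IsUnit.submonoid T ≤ nonZeroDivisors T :=
    inf_le_right.trans (isUnit_le_nonZeroDivisors T)
  have hR'S : R' ≤ S := Subring.le_fractions
  have hRS : R ≤ S := Subring.le_fractions.trans hR'S
  have hGamma : Gamma S = Gamma R :=
    (Subring.gamma_fractions hu).trans (Subring.gamma_fractions hp)
  refine ⟨S, ⟨hRS hpR, R'.quasilocal_fractions_units, hGamma ▸ hRcard, fun P hP => ?_,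
    fun i => ?_⟩, hGamma, hRS, ?_⟩
  · exact Subring.fractions_inter_ideal_trivial hu
      (Subring.fractions_inter_ideal_trivial hp (hRass P hP))
  · exact Subring.fractions_compAvoid_trivial hu
      (Subring.fractions_compAvoid_trivial hp (hRavoid i))
  · intro x hxR hxp
    obtain ⟨s, rfl⟩ := Ideal.mem_span_singleton.mp hxp
    exact ⟨s, hR'S ⟨p, Submonoid.mem_powers p, hxR⟩, rfl⟩

/-- **Lemma 5 (Claim 2).** Given a `p`ca subring `R` of `T`, there is a `p`ca subring `S`
with `Γ(S) = Γ(R)`, `R ⊆ S ⊆ T` and `pT ∩ R ⊆ pS`. -/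
theorem statement2
    {T : Type u} [CommRing T] [IsLocalRing T] [IsNoetherianRing T]
    [IsAdicComplete (IsLocalRing.maximalIdeal T) T]
    {k : ℕ} (hk : 0 < k) (Q : Fin k → Ideal T)
    (hQprime : ∀ i, (Q i).IsPrime)
    (hQnonmax : ∀ i, Q i ≠ IsLocalRing.maximalIdeal T)
    (hQinc : ∀ i j, Q i ≤ Q j → Q i = Q j)
    (p : T) (hp0 : p ≠ 0) (hpreg : p ∈ nonZeroDivisors T) (hpQ : ∀ i, p ∈ Q i)
    (R : Subring T) (hR : IsPcaSubring Q p R) :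
    ∃ S : Subring T, IsPcaSubring Q p S ∧ Gamma ↥S = Gamma ↥R ∧ R ≤ S ∧
      (∀ x ∈ R, x ∈ Ideal.span {p} → ∃ s ∈ S, x = p * s) :=
  statement2_general Q p hpreg R hR
end

section
/- Let (R, R ∩ 𝔪) be a pca subring of T. Then there exists a pca subring S of T with Γ(S) = Γ(R) such that R ⊆ S ⊆ T and pT ∩ S = pS. -/
/-!
Put `B = {x ∈ T | pⁿx ∈ R for some n}` and let `S` be the localization of `B` at `B ∩ 𝔪`,
taken inside `T`. Both steps are saturations `{x | mx ∈ A for some m ∈ M}` of a subring `A`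
along a multiplicative set `M ⊆ A` of nonzerodivisors of `T` (the powers of `p`, resp. the
elements of `A` that are units of `T`). Such a saturation keeps every pca condition except
quasilocality: `x ↦ (m, mx)` is injective, so `Γ` does not grow, and `x = 0` follows from
`mx = 0` in `A`. `S` is quasilocal by construction, and `pT ∩ S = pS` because `B` is closed
under division by `p` and saturating preserves that.
-/

universe u

open IsLocalRing Cardinal nonZeroDivisors

theorem gamma_mono {T : Type u} [CommRing T] {A B : Subring T} (h : A ≤ B) :
    Gamma A ≤ Gamma B :=
  max_le_max_right _ (mk_le_mk_of_subset h)

namespace Subring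

variable {T : Type u} [CommRing T]

def saturation (A : Subring T) (M : Submonoid T) (H : M ≤ A.toSubmonoid) : Subring T :=
  ((subalgebraOfSubring A).saturation M H).toSubring

variable {A : Subring T} {M : Submonoid T} {H : M ≤ A.toSubmonoid}

theorem mem_saturation_iff {x : T} : x ∈ A.saturation M H ↔ ∃ m ∈ M, m * x ∈ A := .rfl

theorem le_saturation : A ≤ A.saturation M H :=
  Subalgebra.le_saturation (s := subalgebraOfSubring A) (H := H)

theorem mem_saturation_of_mul_mem_left {x y : T} (hxy : x * y ∈ A.saturation M H)
    (hx : x ∈ M) : y ∈ A.saturation M H :=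
  Subalgebra.mem_saturation_of_mul_mem_left (H := H) hxy hx

theorem gamma_saturation_le (hM : M ≤ T⁰) : Gamma (A.saturation M H) ≤ Gamma A := by
  choose m hm hmx using fun x : A.saturation M H => mem_saturation_iff.1 x.2
  have hinj :
      Function.Injective fun x => ((⟨m x, H (hm x)⟩ : A), (⟨m x * x, hmx x⟩ : A)) := by
    intro x y hxy
    simp only [Prod.mk.injEq, Subtype.mk.injEq] at hxy
    obtain ⟨hm_eq, hmx_eq⟩ := hxy
    rw [hm_eq] at hmx_eq
    exact Subtype.ext ((isRegular_iff_mem_nonZeroDivisors.2 (hM (hm y))).left hmx_eq)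
  have hcard : #(A.saturation M H) ≤ Gamma A :=
    calc #(A.saturation M H) ≤ #A * #A :=
          (mk_le_of_injective hinj).trans_eq (by rw [mk_prod, lift_id])
      _ ≤ Gamma A * Gamma A := mul_le_mul' (le_max_left _ _) (le_max_left _ _)
      _ = Gamma A := mul_eq_self (le_max_right _ _)
  exact max_le hcard (le_max_right _ _)

theorem eq_zero_of_mem_saturation_of_mem_ideal (hM : M ≤ T⁰) {I : Ideal T}
    (hA : ∀ x ∈ A, x ∈ I → x = 0) : ∀ x ∈ A.saturation M H, x ∈ I → x = 0 := by
  rintro x ⟨m, hm, hmx⟩ hxI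
  exact (mul_left_mem_nonZeroDivisors_eq_zero_iff (hM hm)).1
    (hA _ hmx (I.mul_mem_left m hxI))

theorem eq_zero_of_mem_compAvoid_saturation (hM : M ≤ T⁰) {Q : Ideal T} {p : T}
    (hA : ∀ t ∈ CompAvoid Q p A, t ∈ A → t = 0) :
    ∀ t ∈ CompAvoid Q p (A.saturation M H), t ∈ A.saturation M H → t = 0 := by
  rintro t ⟨q, hq, hqp, r, ⟨n, hn, hnr⟩, rfl⟩ ⟨m, hm, hmt⟩
  have hclear : n * (m * (q * r)) ∈ CompAvoid Q p A :=
    ⟨q, hq, hqp, m * (n * r), mul_mem (H hm) hnr, by ring⟩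
  have h0 := hA _ hclear (mul_mem (H hn) hmt)
  rwa [mul_left_mem_nonZeroDivisors_eq_zero_iff (hM hn),
    mul_left_mem_nonZeroDivisors_eq_zero_iff (hM hm)] at h0

def IsClosedUnderDivBy (A : Subring T) (p : T) : Prop :=
  ∀ t, p * t ∈ A → t ∈ A

theorem isClosedUnderDivBy_saturation_powers {p : T} {H : Submonoid.powers p ≤ A.toSubmonoid} :
    (A.saturation (Submonoid.powers p) H).IsClosedUnderDivBy p :=
  fun _ ht => mem_saturation_of_mul_mem_left ht (Submonoid.mem_powers p)

theorem IsClosedUnderDivBy.saturation {p : T} (hA : A.IsClosedUnderDivBy p) :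
    (A.saturation M H).IsClosedUnderDivBy p := by
  rintro t ⟨m, hm, hmpt⟩
  exact ⟨m, hm, hA _ (by rwa [mul_left_comm])⟩

theorem IsClosedUnderDivBy.mem_span_singleton_iff {p x : T} (hA : A.IsClosedUnderDivBy p)
    (hx : x ∈ A) : x ∈ Ideal.span {p} ↔ ∃ s ∈ A, x = p * s := by
  refine ⟨fun hxp => ?_, fun ⟨s, _, hs⟩ => Ideal.mem_span_singleton.2 ⟨s, hs⟩⟩
  obtain ⟨s, rfl⟩ := Ideal.mem_span_singleton.1 hxp
  exact ⟨s, hA s hx, rfl⟩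

variable [IsLocalRing T]

def localizationAtMaximalIdeal (A : Subring T) : Subring T :=
  A.saturation (A.toSubmonoid ⊓ (maximalIdeal T).primeCompl) inf_le_left

theorem primeCompl_maximalIdeal_le_nonZeroDivisors :
    (maximalIdeal T).primeCompl ≤ T⁰ :=
  fun _ hx => (notMem_maximalIdeal.1 hx).mem_nonZeroDivisors

theorem localizationAtMaximalIdeal_denominators_le_nonZeroDivisors :
    A.toSubmonoid ⊓ (maximalIdeal T).primeCompl ≤ T⁰ :=
  inf_le_right.trans primeCompl_maximalIdeal_le_nonZeroDivisors

theorem quasilocal_localizationAtMaximalIdeal :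
    QuasilocalWithMaxIdeal A.localizationAtMaximalIdeal := by
  rintro ⟨x, b, ⟨_, hbm⟩, hbx⟩ hxm
  have hx : IsUnit x := notMem_maximalIdeal.1 hxm
  have hbxm : b * x ∉ maximalIdeal T := (maximalIdeal.isMaximal T).isPrime.mul_notMem hbm hxm
  have hinv : Ring.inverse x ∈ A.localizationAtMaximalIdeal :=
    ⟨b * x, ⟨hbx, hbxm⟩, by rwa [mul_assoc, Ring.mul_inverse_cancel x hx, mul_one]⟩
  exact isUnit_iff_exists_inv.2 ⟨⟨_, hinv⟩, Subtype.ext (Ring.mul_inverse_cancel x hx)⟩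

end Subring

open Subring

theorem statement3_general
    {T : Type u} [CommRing T] [IsLocalRing T]
    {k : ℕ} (Q : Fin k → Ideal T)
    (p : T) (hpreg : p ∈ nonZeroDivisors T)
    (R : Subring T) (hR : IsPcaSubring Q p R) :
    ∃ S : Subring T, IsPcaSubring Q p S ∧ Gamma ↥S = Gamma ↥R ∧ R ≤ S ∧
      (∀ x ∈ S, x ∈ Ideal.span {p} ↔ ∃ s ∈ S, x = p * s) := by
  obtain ⟨hpR, -, hΓR, hassR, hcaR⟩ := hR
  set B := R.saturation (Submonoid.powers p) (Submonoid.powers_le.2 hpR)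
  have hpowers : Submonoid.powers p ≤ T⁰ := Submonoid.powers_le.2 hpreg
  have hloc := localizationAtMaximalIdeal_denominators_le_nonZeroDivisors (A := B)
  have hRS : R ≤ B.localizationAtMaximalIdeal := le_saturation.trans le_saturation
  have hΓ : Gamma B.localizationAtMaximalIdeal = Gamma R :=
    ((gamma_saturation_le hloc).trans (gamma_saturation_le hpowers)).antisymm (gamma_mono hRS)
  refine ⟨B.localizationAtMaximalIdeal, ⟨hRS hpR, quasilocal_localizationAtMaximalIdeal,
    hΓ ▸ hΓR, fun P hP => ?_, fun i => ?_⟩, hΓ, hRS,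
    fun _ => isClosedUnderDivBy_saturation_powers.saturation.mem_span_singleton_iff⟩
  · exact eq_zero_of_mem_saturation_of_mem_ideal hloc
      (eq_zero_of_mem_saturation_of_mem_ideal hpowers (hassR P hP))
  · exact eq_zero_of_mem_compAvoid_saturation hloc
      (eq_zero_of_mem_compAvoid_saturation hpowers (hcaR i))

/-- **Lemma 6 (fixing).** Given a `p`ca subring `R` of `T`, there is a `p`ca subring `S`
with `Γ(S) = Γ(R)`, `R ⊆ S ⊆ T` and `pT ∩ S = pS`. -/
theorem statement3
    {T : Type u} [CommRing T] [IsLocalRing T] [IsNoetherianRing T]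
    [IsAdicComplete (IsLocalRing.maximalIdeal T) T]
    {k : ℕ} (hk : 0 < k) (Q : Fin k → Ideal T)
    (hQprime : ∀ i, (Q i).IsPrime)
    (hQnonmax : ∀ i, Q i ≠ IsLocalRing.maximalIdeal T)
    (hQinc : ∀ i j, Q i ≤ Q j → Q i = Q j)
    (p : T) (hp0 : p ≠ 0) (hpreg : p ∈ nonZeroDivisors T) (hpQ : ∀ i, p ∈ Q i)
    (R : Subring T) (hR : IsPcaSubring Q p R) :
    ∃ S : Subring T, IsPcaSubring Q p S ∧ Gamma ↥S = Gamma ↥R ∧ R ≤ S ∧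
      (∀ x ∈ S, x ∈ Ideal.span {p} ↔ ∃ s ∈ S, x = p * s) :=
  statement3_general Q p hpreg R hR
end

section
/- Suppose dim T ≥ 1 and every associated prime P of the T-module T/pT satisfies P ⊆ ⋃_{i=1}^k Qᵢ. Let (R, R ∩ 𝔪) be a pca subring of T such that pT ∩ R = pR, let J be an ideal of T with J ⊄ Qᵢ for all i ∈ {1, …, k}, and let u + J ∈ T/J. Then there exists an infinite pca subring S of T such that: (1) R ⊆ S ⊆ T; (2) Γ(S) = Γ(R); (3) u + J is in the image of the canonical map S → T/J; (4) if u ∈ J, then S ∩ J ⊄ Qᵢ for each i ∈ {1, …, k}; and (5) pT ∩ S = pS. -/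
universe u

/-!
Choose `x ∈ u + J` whose residue modulo each `Qᵢ` is transcendental over the image of `R`.
This is possible because `|T/Qᵢ| = |T|`: a complete local ring has at most `|T/𝔪| ^ ℵ₀`
elements (digit expansions along generators of `𝔪`), while for `t ∈ 𝔪 \ Qᵢ` the series
`∑ σ(aₙ) tⁿ` give `|T/𝔪| ^ ℵ₀` distinct classes modulo `Qᵢ`; the algebraic elements number at
most `Γ(R) < |T|`, and an induction over the pairwise incomparable `Qᵢ` avoids all of them.

Take `S = R[x]` localized at `R[x] ∩ 𝔪`. As `pT ∩ R = pR`, every nonzero `f ∈ R[X]` is `pⁿ g`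
with a coefficient of `g` outside `pT`, so `g(x) ∉ ⋃ Qᵢ` by transcendence. Hence every nonzero
`s ∈ S` is `pⁿ s'` with `s' ∉ ⋃ Qᵢ`. Since `⋃ Qᵢ` contains the zero divisors of `T/pT` and `p`
is regular, such `s'` are nonzerodivisors of `T` and of `T/pT`, and all the remaining
properties follow by cancelling powers of `p`.
-/

open Cardinal Polynomial IsLocalRing
open scoped nonZeroDivisors

section Cardinality

variable {T : Type u} [CommRing T]

theorem IsHausdorff.eq_of_forall_sub_mem_pow {I : Ideal T} [IsHausdorff I T] {x y : T}
    (h : ∀ n : ℕ, x - y ∈ I ^ n) : x = y := by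
  refine (IsHausdorff.eq_iff_smodEq (I := I)).mpr fun n => ?_
  rw [SModEq.sub_mem, smul_eq_mul, Ideal.mul_top]
  exact h n

/-- Write `t = σ(t̄) + ∑ cᵢ(t) vᵢ` for generators `vᵢ` of `I`; iterating `t ↦ cᵢ(t)` along words
in the indices yields residues that determine `t` modulo every `I ^ k`. -/
theorem mk_le_mk_quotient_pow_aleph0 (I : Ideal T) (hI : I.FG) [IsHausdorff I T] :
    #T ≤ #(T ⧸ I) ^ ℵ₀ := by
  obtain ⟨n, v, hv⟩ := Submodule.fg_iff_exists_fin_generating_family.mp hI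
  let σ : T ⧸ I → T := Function.surjInv Ideal.Quotient.mk_surjective
  have hσ : ∀ t, t - σ (Ideal.Quotient.mk I t) ∈ Submodule.span T (Set.range v) := fun t => by
    rw [hv, ← Ideal.Quotient.eq]
    exact (Function.surjInv_eq _ _).symm
  choose c hc using fun t => (Submodule.mem_span_range_iff_exists_fun T).mp (hσ t)
  let digits : T → List (Fin n) → T ⧸ I := fun t w => Ideal.Quotient.mk I (w.foldl c t)
  have sub_mem_pow : ∀ k t t', digits t = digits t' → t - t' ∈ I ^ k := by
    intro k
    induction k with
    | zero => simp
    | succ k ih =>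
      intro t t' h
      have e := hc t
      have e' := hc t'
      rw [show Ideal.Quotient.mk I t = Ideal.Quotient.mk I t' from congrFun h []] at e
      simp only [smul_eq_mul] at e e'
      have hdiff : t - t' = ∑ i, (c t i - c t' i) * v i := by
        simp only [sub_mul, Finset.sum_sub_distrib]
        linear_combination e' - e
      rw [hdiff, pow_succ]
      refine Ideal.sum_mem _ fun i _ => Ideal.mul_mem_mul (ih _ _ ?_) ?_
      · exact funext fun w => congrFun h (i :: w)
      · rw [← hv]; exact Submodule.subset_span ⟨i, rfl⟩
  have hinj : Function.Injective digits := fun t t' h =>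
    IsHausdorff.eq_of_forall_sub_mem_pow (I := I) fun k => sub_mem_pow k t t' h
  calc #T ≤ #(List (Fin n) → T ⧸ I) := mk_le_of_injective hinj
    _ = #(T ⧸ I) ^ lift.{u} #(List (Fin n)) := by rw [mk_arrow, lift_uzero]
    _ ≤ #(T ⧸ I) ^ ℵ₀ := power_le_power_left (mk_ne_zero _) (lift_le_aleph0.mpr mk_le_aleph0)

/-- `L a` is the sum of the `I`-adically convergent series `∑ aₙ tⁿ`. -/
theorem IsAdicComplete.exists_series_sum {I : Ideal T} [IsAdicComplete I T] {t : T}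
    (ht : t ∈ I) : ∃ L : (ℕ → T) → T, ∀ a, L a = a 0 + t * L (fun n => a (n + 1)) := by
  let F : (ℕ → T) → ℕ → T := fun a n => ∑ k ∈ Finset.range n, a k * t ^ k
  have hF : ∀ a n, F a (n + 1) = a 0 + t * F (fun k => a (k + 1)) n := fun a n => by
    simp only [F, Finset.sum_range_succ', Finset.mul_sum, pow_succ, pow_zero, mul_one]
    rw [add_comm]
    congr 1
    exact Finset.sum_congr rfl fun k _ => by ring
  have hcauchy : ∀ a {m n}, m ≤ n → F a m ≡ F a n [SMOD (I ^ m • ⊤ : Ideal T)] := by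
    intro a m n hmn
    rw [SModEq.sub_mem, smul_eq_mul, Ideal.mul_top, ← neg_mem_iff, neg_sub]
    simp only [F]
    rw [← Finset.sum_range_add_sum_Ico _ hmn, add_sub_cancel_left]
    exact Ideal.sum_mem _ fun k hk => Ideal.mul_mem_left _ _
      (Ideal.pow_le_pow_right (Finset.mem_Ico.mp hk).1 (Ideal.pow_mem_pow ht k))
  choose L hL using fun a => IsPrecomplete.prec inferInstance (hcauchy a)
  have hlim : ∀ a n, L a - F a n ∈ I ^ n := fun a n => by
    have := hL a n
    rwa [SModEq.sub_mem, smul_eq_mul, Ideal.mul_top, ← neg_mem_iff, neg_sub] at this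
  refine ⟨L, fun a => IsHausdorff.eq_of_forall_sub_mem_pow (I := I) fun n => ?_⟩
  have h₁ := Ideal.pow_le_pow_right (Nat.le_succ n) (hlim a (n + 1))
  have h₂ := Ideal.mul_mem_left (I ^ n) t (hlim (fun k => a (k + 1)) n)
  rw [hF] at h₁
  convert sub_mem h₁ h₂ using 1
  ring

/-- For `t ∈ I \ P`, the map `a ↦ ∑ σ(aₙ) tⁿ` is injective modulo `P`: equal leading digits are
cancelled using `L a = σ(a₀) + t L(a ∘ succ)` and `t ∉ P`. -/
theorem mk_quotient_pow_aleph0_le (I P : Ideal T) [IsAdicComplete I T] [P.IsPrime]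
    (hPI : P < I) : #(T ⧸ I) ^ ℵ₀ ≤ #(T ⧸ P) := by
  obtain ⟨t, htI, htP⟩ := SetLike.exists_of_lt hPI
  obtain ⟨L, hL⟩ := IsAdicComplete.exists_series_sum (I := I) htI
  let σ : T ⧸ I → T := Function.surjInv Ideal.Quotient.mk_surjective
  have hσ : ∀ z, Ideal.Quotient.mk I (σ z) = z := Function.surjInv_eq _
  have head_eq : ∀ a b, L (σ ∘ a) - L (σ ∘ b) ∈ I → a 0 = b 0 := fun a b h => by
    have e : σ (a 0) - σ (b 0) = (L (σ ∘ a) - L (σ ∘ b))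
        - t * (L (fun n => (σ ∘ a) (n + 1)) - L (fun n => (σ ∘ b) (n + 1))) := by
      rw [hL (σ ∘ a), hL (σ ∘ b)]; simp only [Function.comp_apply]; ring
    have : σ (a 0) - σ (b 0) ∈ I := e ▸ sub_mem h (Ideal.mul_mem_right _ I htI)
    simpa only [hσ] using Ideal.Quotient.eq.mpr this
  have digit_eq : ∀ n a b, L (σ ∘ a) - L (σ ∘ b) ∈ P → a n = b n := by
    intro n
    induction n with
    | zero => exact fun a b h => head_eq a b (hPI.le h)
    | succ n ih =>
      intro a b h
      have h0 := head_eq a b (hPI.le h)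
      rw [hL (σ ∘ a), hL (σ ∘ b)] at h
      simp only [Function.comp_apply, h0, add_sub_add_left_eq_sub, ← mul_sub] at h
      exact ih (fun k => a (k + 1)) (fun k => b (k + 1))
        ((‹P.IsPrime›.mem_or_mem h).resolve_left htP)
  have hinj : Function.Injective fun a => Ideal.Quotient.mk P (L (σ ∘ a)) := fun a b h =>
    funext fun n => digit_eq n a b (Ideal.Quotient.eq.mp h)
  calc #(T ⧸ I) ^ ℵ₀ = #(ℕ → T ⧸ I) := by rw [mk_arrow, lift_uzero, mk_nat, lift_aleph0]
    _ ≤ #(T ⧸ P) := mk_le_of_injective hinj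

theorem IsLocalRing.mk_le_mk_quotient [IsLocalRing T] [IsNoetherianRing T]
    [IsAdicComplete (maximalIdeal T) T] (P : Ideal T) [P.IsPrime] (hP : P ≠ maximalIdeal T) :
    #T ≤ #(T ⧸ P) :=
  (mk_le_mk_quotient_pow_aleph0 _ (IsNoetherian.noetherian _)).trans
    (mk_quotient_pow_aleph0_le _ P (lt_of_le_of_ne (le_maximalIdeal ‹P.IsPrime›.ne_top) hP))

end Cardinality

section Avoidance

variable {T : Type u} [CommRing T]

theorem exists_mem_mk_add_notMem {P I : Ideal T} [P.IsPrime] (hI : ¬ I ≤ P) {B : Set (T ⧸ P)}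
    (hB : #B < #(T ⧸ P)) (u : T) : ∃ z ∈ I, Ideal.Quotient.mk P (u + z) ∉ B := by
  obtain ⟨i, hiI, hiP⟩ := SetLike.not_le_iff_exists.mp hI
  by_contra! h
  let e : T ⧸ P → B := fun w => ⟨_, h (i * w.out) (I.mul_mem_right _ hiI)⟩
  have he : Function.Injective e := fun w w' hw => by
    have := congrArg Subtype.val hw
    simp only [map_add, map_mul, Ideal.Quotient.mk_out, add_right_inj, e] at this
    exact mul_left_cancel₀ (Ideal.Quotient.eq_zero_iff_mem.not.mpr hiP) this
  exact hB.not_ge (mk_le_of_injective he)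

theorem exists_sub_mem_forall_mk_notMem (C : Finset (Ideal T)) (hprime : ∀ P ∈ C, P.IsPrime)
    (hC : ∀ P ∈ C, ∀ P' ∈ C, P ≤ P' → P = P') (B : (P : Ideal T) → Set (T ⧸ P))
    (hB : ∀ P ∈ C, #(B P) < #(T ⧸ P)) (I : Ideal T) (hI : ∀ P ∈ C, ¬ I ≤ P) (u : T) :
    ∃ x, x - u ∈ I ∧ ∀ P ∈ C, Ideal.Quotient.mk P x ∉ B P := by
  classical
  induction C using Finset.induction_on generalizing I u with
  | empty => exact ⟨u, by simp, by simp⟩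
  | insert P₀ C hP₀ ih =>
    simp only [Finset.mem_insert, forall_eq_or_imp] at hprime hC hB hI
    have := hprime.1
    obtain ⟨z, hzI, hz⟩ := exists_mem_mk_add_notMem hI.1 hB.1 u
    -- the correction `x - (u + z) ∈ I * P₀` keeps `x ≡ u + z` modulo `P₀`
    have hIP₀ : ∀ P ∈ C, ¬ I * P₀ ≤ P := fun P hP hle => by
      have := hprime.2 P hP
      rcases (Ideal.IsPrime.mul_le this).mp hle with h | h
      · exact hI.2 P hP h
      · exact hP₀ (hC.1.2 P hP h ▸ hP)
    obtain ⟨x, hx, hxB⟩ := ih hprime.2 (fun P hP P' hP' => (hC.2 P hP).2 P' hP') hB.2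
      (I * P₀) hIP₀ (u + z)
    refine ⟨x, ?_, ?_⟩
    · simpa [sub_add_eq_sub_sub] using add_mem (Ideal.mul_le_left hx) hzI
    · simp only [Finset.mem_insert, forall_eq_or_imp]
      exact ⟨by rwa [Ideal.Quotient.eq.mpr (Ideal.mul_le_right hx)], hxB⟩

end Avoidance

theorem Transcendental.map_coeff_eq_zero {A K : Type*} [CommRing A] [CommRing K] {φ : A →+* K}
    {c : K} (hc : Transcendental φ.range c) {f : A[X]} (hf : f.eval₂ φ c = 0) (j : ℕ) :
    φ (f.coeff j) = 0 := by
  have : f.map φ.rangeRestrict = 0 := transcendental_iff.mp hc _ (by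
    rwa [aeval_def, eval₂_map, show (algebraMap φ.range K).comp φ.rangeRestrict = φ from rfl])
  simpa using congrArg (fun g => (g.coeff j : K)) this

theorem mk_setOf_isAlgebraic_range_le {A K : Type u} [CommRing A] [CommRing K] [IsDomain K]
    (φ : A →+* K) : #{c : K | IsAlgebraic φ.range c} ≤ max #A ℵ₀ := by
  have : Module.IsTorsionFree φ.range K := .comap Subtype.val
    (fun r hr => by simpa [isRegular_iff_ne_zero] using hr.ne_zero) fun _ _ => rfl
  calc #{c : K | IsAlgebraic φ.range c} ≤ max #φ.range ℵ₀ := Algebraic.cardinalMk_le_max _ _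
    _ ≤ max #A ℵ₀ := max_le_max_right _ (mk_le_of_surjective φ.rangeRestrict_surjective)

theorem exists_sub_mem_forall_transcendental {T : Type u} [CommRing T] [IsLocalRing T]
    [IsNoetherianRing T] [IsAdicComplete (maximalIdeal T) T] {ι : Type*} [Fintype ι]
    (Q : ι → Ideal T) (hQprime : ∀ i, (Q i).IsPrime) (hQnonmax : ∀ i, Q i ≠ maximalIdeal T)
    (hQinc : ∀ i j, Q i ≤ Q j → Q i = Q j) {R : Subring T} (hR : Gamma R < #T)
    {J : Ideal T} (hJ : ∀ i, ¬ J ≤ Q i) (u : T) :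
    ∃ x, x - u ∈ J ∧ ∀ i, Transcendental ((Ideal.Quotient.mk (Q i)).comp R.subtype).range
      (Ideal.Quotient.mk (Q i) x) := by
  classical
  have hB : ∀ i, #{c | IsAlgebraic ((Ideal.Quotient.mk (Q i)).comp R.subtype).range c}
      < #(T ⧸ Q i) := fun i => by
    have := hQprime i
    exact (mk_setOf_isAlgebraic_range_le _).trans_lt
      (hR.trans_le (mk_le_mk_quotient _ (hQnonmax i)))
  obtain ⟨x, hxu, hx⟩ := exists_sub_mem_forall_mk_notMem (Finset.univ.image Q)
    (Finset.forall_mem_image.mpr fun i _ => hQprime i) (by simpa using hQinc)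
    (fun P => {c | IsAlgebraic ((Ideal.Quotient.mk P).comp R.subtype).range c})
    (Finset.forall_mem_image.mpr fun i _ => hB i)
    J (Finset.forall_mem_image.mpr fun i _ => hJ i) u
  exact ⟨x, hxu, fun i => hx _ (Finset.mem_image_of_mem _ (Finset.mem_univ i))⟩

theorem pow_injective_of_mem_nonZeroDivisors {T : Type*} [CommRing T] {p : T}
    (hp : p ∈ T⁰) (hu : ¬ IsUnit p) : Function.Injective (p ^ · : ℕ → T) := by
  refine Function.Injective.of_lt_imp_ne fun m n hmn h => hu ?_
  obtain ⟨d, rfl⟩ := Nat.exists_eq_add_of_lt hmn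
  have : p ^ (d + 1) = 1 := (mul_cancel_left_mem_nonZeroDivisors (pow_mem hp m)).mp
    (by rw [← pow_add, mul_one, ← add_assoc]; exact h.symm)
  exact (isUnit_pow_iff d.succ_ne_zero).mp (by rw [this]; exact isUnit_one)

theorem IsLocalRing.finiteMultiplicity_of_mem_maximalIdeal {T : Type u} [CommRing T]
    [IsNoetherianRing T] [IsLocalRing T] {p y : T} (hp : p ∈ maximalIdeal T) (hy : y ≠ 0) :
    FiniteMultiplicity p y := by
  have hne : Ideal.span {p} ≠ ⊤ := by rwa [Ne, Ideal.span_singleton_eq_top]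
  obtain ⟨n, hn⟩ : ∃ n, y ∉ Ideal.span {p} ^ n := by
    by_contra! h
    exact hy (by simpa [Ideal.iInf_pow_eq_bot_of_isLocalRing _ hne] using Ideal.mem_iInf.mpr h)
  refine FiniteMultiplicity.def.mpr ⟨n, fun h => hn ?_⟩
  rw [Ideal.span_singleton_pow, Ideal.mem_span_singleton]
  exact (pow_dvd_pow p n.le_succ).trans h

namespace Subring

variable {T : Type u} [CommRing T]

/-- The subring `A[(A ∩ Tˣ)⁻¹]` of `T`: when `T` is local, the localization of `A` at `A ∩ 𝔪`. -/
def localizeUnits (A : Subring T) : Subring T where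
  carrier := {t | ∃ b : Tˣ, (b : T) ∈ A ∧ t * b ∈ A}
  mul_mem' := by
    rintro s t ⟨b, hb, hsb⟩ ⟨c, hc, htc⟩
    refine ⟨b * c, by simpa using A.mul_mem hb hc, ?_⟩
    simpa [mul_mul_mul_comm] using A.mul_mem hsb htc
  one_mem' := ⟨1, A.one_mem, by simp⟩
  add_mem' := by
    rintro s t ⟨b, hb, hsb⟩ ⟨c, hc, htc⟩
    refine ⟨b * c, by simpa using A.mul_mem hb hc, ?_⟩
    have : (s + t) * ↑(b * c) = s * b * c + t * c * b := by push_cast; ring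
    rw [this]
    exact A.add_mem (A.mul_mem hsb hc) (A.mul_mem htc hb)
  zero_mem' := ⟨1, A.one_mem, by simp⟩
  neg_mem' := by
    rintro t ⟨b, hb, htb⟩
    exact ⟨b, hb, by simpa using A.neg_mem htb⟩

variable {A : Subring T}

theorem le_localizeUnits : A ≤ A.localizeUnits := fun t ht => ⟨1, A.one_mem, by simpa using ht⟩

theorem inv_mem_localizeUnits {u : Tˣ} (hu : (u : T) ∈ A.localizeUnits) :
    (↑u⁻¹ : T) ∈ A.localizeUnits := by
  obtain ⟨b, hb, hub⟩ := hu
  exact ⟨u * b, by simpa using hub, by simpa using hb⟩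

theorem quasilocalWithMaxIdeal_localizeUnits [IsLocalRing T] :
    QuasilocalWithMaxIdeal A.localizeUnits := by
  rintro ⟨s, hs⟩ hsm
  obtain ⟨u, rfl⟩ := notMem_maximalIdeal.mp hsm
  exact IsUnit.of_mul_eq_one ⟨_, inv_mem_localizeUnits hs⟩ (Subtype.ext (by simp))

theorem mk_localizeUnits_le : #A.localizeUnits ≤ #A * #A := by
  choose b hb hsb using fun s : A.localizeUnits => s.2
  rw [← lift_id #A, ← mk_prod]
  refine mk_le_of_injective (f := fun s => ((⟨s * b s, hsb s⟩ : A), (⟨b s, hb s⟩ : A)))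
    fun s s' h => Subtype.ext ?_
  simp only [Prod.mk.injEq, Subtype.mk.injEq] at h
  have h₁ := h.1
  rw [h.2] at h₁
  exact (Units.mul_left_inj (b s')).mp h₁

theorem Gamma_localizeUnits_le : Gamma A.localizeUnits ≤ Gamma A :=
  max_le (mk_localizeUnits_le.trans ((mul_le_mul' (le_max_left _ _) (le_max_left _ _)).trans
    (mul_eq_self (le_max_right _ _)).le)) (le_max_right _ _)

end Subring

open Subring

section PowFactorization

variable {T : Type u} [CommRing T] {ι : Type*} (Q : ι → Ideal T) (p : T)

def HasPowFactorization (S : Subring T) : Prop :=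
  ∀ s ∈ S, s ≠ 0 → ∃ n : ℕ, ∃ s' ∈ S, s = p ^ n * s' ∧ ∀ i, s' ∉ Q i

variable {Q p}

theorem HasPowFactorization.localizeUnits {A : Subring T} (hA : HasPowFactorization Q p A) :
    HasPowFactorization Q p A.localizeUnits := by
  rintro s ⟨b, hb, hsb⟩ hs
  obtain ⟨n, a, ha, hsba, haQ⟩ := hA _ hsb (by simpa using hs)
  refine ⟨n, a * ↑b⁻¹, ⟨b, hb, by simpa using ha⟩, ?_, fun i hi => haQ i ?_⟩
  · rw [← mul_assoc, ← hsba]; simp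
  · simpa using (Q i).mul_mem_right (b : T) hi

variable [IsNoetherianRing T]

theorem exists_mem_of_mul_mem_span_singleton
    (hAss : ∀ P ∈ associatedPrimes T (T ⧸ Ideal.span {p}), ∀ x ∈ P, ∃ i, x ∈ Q i) {z w : T}
    (hzw : z * w ∈ Ideal.span {p}) (hw : w ∉ Ideal.span {p}) : ∃ i, z ∈ Q i := by
  have : z ∈ ⋃ P ∈ associatedPrimes T (T ⧸ Ideal.span {p}), (P : Set T) := by
    rw [biUnion_associatedPrimes_eq_zero_divisors]
    exact ⟨Ideal.Quotient.mk _ w, by rwa [Ne, Ideal.Quotient.eq_zero_iff_mem],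
      Ideal.Quotient.eq_zero_iff_mem.mpr hzw⟩
  obtain ⟨P, hP, hzP⟩ := Set.mem_iUnion₂.mp this
  exact hAss P hP z hzP

variable {S : Subring T}

/-- Compare the powers of `p` in `r = pˡ r'` and `q r = pᵐ c`: if `m ≤ l` then `c ∈ Q i`,
otherwise `q r' ∈ pT` with `q ∉ pT` puts `r'` in some `Q j`. -/
theorem HasPowFactorization.mul_eq_zero (hS : HasPowFactorization Q p S)
    (hAss : ∀ P ∈ associatedPrimes T (T ⧸ Ideal.span {p}), ∀ x ∈ P, ∃ i, x ∈ Q i)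
    (hp : p ∈ T⁰) {i : ι} {q r : T} (hq : q ∈ Q i)
    (hqp : q ∉ Ideal.span {p}) (hr : r ∈ S) (hqr : q * r ∈ S) : q * r = 0 := by
  by_contra h0
  obtain ⟨l, r', -, rfl, hr'⟩ := hS r hr (right_ne_zero_of_mul h0)
  obtain ⟨m, c, -, hc, hc'⟩ := hS _ hqr h0
  rcases le_or_gt m l with hml | hlm
  · obtain ⟨d, rfl⟩ := Nat.exists_eq_add_of_le hml
    have : c = q * (p ^ d * r') :=
      ((mul_cancel_left_mem_nonZeroDivisors (pow_mem hp m)).mp (by rw [← hc]; ring)).symm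
    exact hc' i (this ▸ (Q i).mul_mem_right _ hq)
  · obtain ⟨d, rfl⟩ := Nat.exists_eq_add_of_lt hlm
    have : r' * q = p * (p ^ d * c) := (mul_cancel_left_mem_nonZeroDivisors (pow_mem hp l)).mp
      (by linear_combination hc)
    obtain ⟨j, hj⟩ := exists_mem_of_mul_mem_span_singleton hAss
      (this ▸ Ideal.mul_mem_right _ _ (Ideal.mem_span_singleton_self p)) hqp
    exact hr' j hj

variable [IsLocalRing T]

/-- Writing a zero divisor `y` of `a` as `pᵐ y'` with `p ∤ y'` moves `a` into an associated
prime of `T/pT`. -/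
theorem mem_nonZeroDivisors_of_forall_notMem
    (hAss : ∀ P ∈ associatedPrimes T (T ⧸ Ideal.span {p}), ∀ x ∈ P, ∃ i, x ∈ Q i)
    (hpm : p ∈ maximalIdeal T) (hp : p ∈ T⁰) {a : T} (ha : ∀ i, a ∉ Q i) : a ∈ T⁰ := by
  refine mem_nonZeroDivisors_iff_left.mpr fun y hy => ?_
  by_contra hy0
  obtain ⟨y', hyy', hpy'⟩ :=
    (finiteMultiplicity_of_mem_maximalIdeal hpm hy0).exists_eq_pow_mul_and_not_dvd
  have : a * y' = 0 := (mul_cancel_left_mem_nonZeroDivisors (pow_mem hp _)).mp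
    (by rw [mul_zero, ← hy, hyy']; ring)
  obtain ⟨i, hi⟩ := exists_mem_of_mul_mem_span_singleton hAss (z := a) (w := y')
    (this ▸ zero_mem _) (by rwa [Ideal.mem_span_singleton])
  exact ha i hi

theorem HasPowFactorization.eq_zero_of_mem_associatedPrimes (hS : HasPowFactorization Q p S)
    (hAss : ∀ P ∈ associatedPrimes T (T ⧸ Ideal.span {p}), ∀ x ∈ P, ∃ i, x ∈ Q i)
    (hpm : p ∈ maximalIdeal T) (hp : p ∈ T⁰) {P : Ideal T}
    (hP : P ∈ associatedPrimes T T) {s : T} (hs : s ∈ S) (hsP : s ∈ P) : s = 0 := by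
  by_contra hs0
  obtain ⟨n, s', -, rfl, hs'⟩ := hS s hs hs0
  have hreg : p ^ n * s' ∈ T⁰ :=
    mul_mem (pow_mem hp n) (mem_nonZeroDivisors_of_forall_notMem hAss hpm hp hs')
  have : p ^ n * s' ∈ ⋃ P ∈ associatedPrimes T T, (P : Set T) := Set.mem_biUnion hP hsP
  rw [biUnion_associatedPrimes_eq_compl_nonZeroDivisors] at this
  exact this hreg

theorem HasPowFactorization.mem_span_singleton_iff (hS : HasPowFactorization Q p S)
    (hAss : ∀ P ∈ associatedPrimes T (T ⧸ Ideal.span {p}), ∀ x ∈ P, ∃ i, x ∈ Q i)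
    (hpm : p ∈ maximalIdeal T) (hpS : p ∈ S) {s : T} (hs : s ∈ S) :
    s ∈ Ideal.span {p} ↔ ∃ s' ∈ S, s = p * s' := by
  refine ⟨fun hsp => ?_, fun ⟨s', _, e⟩ => Ideal.mem_span_singleton'.mpr ⟨s', by rw [e, mul_comm]⟩⟩
  by_cases hs0 : s = 0
  · exact ⟨0, S.zero_mem, by simp [hs0]⟩
  obtain ⟨n, s', hs'S, rfl, hs'⟩ := hS s hs hs0
  cases n with
  | zero =>
    have h1 : (1 : T) ∉ Ideal.span {p} := by
      rw [← Ideal.eq_top_iff_one, Ideal.span_singleton_eq_top]; exact hpm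
    obtain ⟨i, hi⟩ := exists_mem_of_mul_mem_span_singleton hAss (by simpa using hsp) h1
    exact absurd hi (hs' i)
  | succ n => exact ⟨p ^ n * s', S.mul_mem (S.pow_mem hpS n) hs'S, by ring⟩

theorem HasPowFactorization.isPcaSubring {k : ℕ} {Q : Fin k → Ideal T}
    (hS : HasPowFactorization Q p S)
    (hAss : ∀ P ∈ associatedPrimes T (T ⧸ Ideal.span {p}), ∀ x ∈ P, ∃ i, x ∈ Q i)
    (hpm : p ∈ maximalIdeal T) (hp : p ∈ T⁰) (hpS : p ∈ S) (hSloc : QuasilocalWithMaxIdeal S)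
    (hScard : Gamma S < #T) : IsPcaSubring Q p S := by
  refine ⟨hpS, hSloc, hScard, fun P hP s hs hsP => ?_, ?_⟩
  · exact hS.eq_zero_of_mem_associatedPrimes hAss hpm hp hP hs hsP
  · rintro i t ⟨q, hq, hqp, r, hr, rfl⟩ hqr
    exact hS.mul_eq_zero hAss hp hq hqp hr hqr

end PowFactorization

section Adjoin

variable {T : Type u} [CommRing T] {R : Subring T} {x : T}

theorem Gamma_range_eval₂_le : Gamma (eval₂RingHom R.subtype x).range ≤ Gamma R :=
  max_le ((mk_le_of_surjective (eval₂RingHom R.subtype x).rangeRestrict_surjective).trans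
    cardinalMk_le_max) (le_max_right _ _)

variable [IsNoetherianRing T] [IsLocalRing T] {ι : Type*} {Q : ι → Ideal T} {p : T}

theorem hasPowFactorization_range_eval₂ (hpm : p ∈ maximalIdeal T) (hpR : p ∈ R)
    (hpdvd : ∀ r ∈ R, r ∈ Ideal.span {p} → ∃ r' ∈ R, r = p * r')
    (hRQ : ∀ i, ∀ r ∈ R, r ∈ Q i → r ∈ Ideal.span {p})
    (hx : ∀ i, Transcendental ((Ideal.Quotient.mk (Q i)).comp R.subtype).range
      (Ideal.Quotient.mk (Q i) x)) :
    HasPowFactorization Q p (eval₂RingHom R.subtype x).range := by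
  intro a ha ha0
  obtain ⟨F, rfl⟩ := RingHom.mem_range.mp ha
  let p' : R := ⟨p, hpR⟩
  have hfin : FiniteMultiplicity (C p') F := by
    obtain ⟨j, hj⟩ : ∃ j, F.coeff j ≠ 0 := by
      by_contra! h
      exact ha0 (by rw [show F = 0 from Polynomial.ext (by simpa using h), map_zero])
    obtain ⟨n, hn⟩ := FiniteMultiplicity.def.mp
      (finiteMultiplicity_of_mem_maximalIdeal hpm (Subtype.coe_ne_coe.mpr hj))
    refine FiniteMultiplicity.def.mpr ⟨n, fun h => hn ?_⟩
    rw [← C_pow, C_dvd_iff_dvd_coeff] at h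
    exact map_dvd R.subtype (h j)
  obtain ⟨G, hFG, hG⟩ := hfin.exists_eq_pow_mul_and_not_dvd
  generalize multiplicity (C p') F = n at hFG
  refine ⟨n, _, ⟨G, rfl⟩, ?_, fun i hi => hG ?_⟩
  · rw [hFG, map_mul, map_pow, coe_eval₂RingHom, eval₂_C]
    rfl
  refine (C_dvd_iff_dvd_coeff _ _).mpr fun j => ?_
  have hj := (hx i).map_coeff_eq_zero
    (by rw [← hom_eval₂]; exact Ideal.Quotient.eq_zero_iff_mem.mpr hi) j
  obtain ⟨r, hr, e⟩ :=
    hpdvd _ (G.coeff j).2 (hRQ i _ (G.coeff j).2 (Ideal.Quotient.eq_zero_iff_mem.mp hj))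
  exact ⟨⟨r, hr⟩, Subtype.ext e⟩

end Adjoin

theorem statement4_general
    {T : Type u} [CommRing T] [IsLocalRing T] [IsNoetherianRing T]
    [IsAdicComplete (IsLocalRing.maximalIdeal T) T]
    {k : ℕ} (hk : 0 < k) (Q : Fin k → Ideal T)
    (hQprime : ∀ i, (Q i).IsPrime)
    (hQnonmax : ∀ i, Q i ≠ IsLocalRing.maximalIdeal T)
    (hQinc : ∀ i j, Q i ≤ Q j → Q i = Q j)
    (p : T) (hpreg : p ∈ nonZeroDivisors T) (hpQ : ∀ i, p ∈ Q i)
    (hAss : ∀ P ∈ associatedPrimes T (T ⧸ Ideal.span {p}), ∀ x ∈ P, ∃ i, x ∈ Q i)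
    (R : Subring T) (hR : IsPcaSubring Q p R)
    (hpR : ∀ x ∈ R, x ∈ Ideal.span {p} ↔ ∃ r ∈ R, x = p * r)
    (J : Ideal T) (hJ : ∀ i, ¬ J ≤ Q i) (u : T) :
    ∃ S : Subring T, IsPcaSubring Q p S ∧ (S : Set T).Infinite ∧
      R ≤ S ∧ Gamma ↥S = Gamma ↥R ∧
      (∃ s ∈ S, Ideal.Quotient.mk J s = Ideal.Quotient.mk J u) ∧
      (u ∈ J → ∀ i, ¬ ((J : Set T) ∩ (S : Set T) ⊆ (Q i : Set T))) ∧
      (∀ x ∈ S, x ∈ Ideal.span {p} ↔ ∃ s ∈ S, x = p * s) := by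
  obtain ⟨hpR₀, -, hcardR, -, hcaR⟩ := hR
  have hpm : p ∈ maximalIdeal T := le_maximalIdeal (hQprime ⟨0, hk⟩).ne_top (hpQ ⟨0, hk⟩)
  have hRQ : ∀ i, ∀ r ∈ R, r ∈ Q i → r ∈ Ideal.span {p} := fun i r hr hrQ => by
    by_contra hrp
    exact hrp (hcaR i r ⟨r, hrQ, hrp, 1, R.one_mem, (mul_one r).symm⟩ hr ▸ zero_mem _)
  obtain ⟨x, hxu, hx⟩ :=
    exists_sub_mem_forall_transcendental Q hQprime hQnonmax hQinc hcardR hJ u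
  set S := (eval₂RingHom R.subtype x).range.localizeUnits
  have hRS : R ≤ S := fun r hr => le_localizeUnits ⟨C ⟨r, hr⟩, eval₂_C _ _⟩
  have hxS : x ∈ S := le_localizeUnits ⟨X, eval₂_X _ _⟩
  have hS : HasPowFactorization Q p S :=
    (hasPowFactorization_range_eval₂ hpm hpR₀ (fun r hr => (hpR r hr).mp) hRQ hx).localizeUnits
  have hΓ : Gamma S = Gamma R := le_antisymm (Gamma_localizeUnits_le.trans Gamma_range_eval₂_le)
    (max_le_max_right _ (mk_le_of_injective (Subring.inclusion_injective hRS)))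
  have hxQ : ∀ i, x ∉ Q i := fun i hi => by
    have := hQprime i
    exact hx i (Ideal.Quotient.eq_zero_iff_mem.mpr hi ▸ isAlgebraic_zero)
  refine ⟨S, hS.isPcaSubring hAss hpm hpreg (hRS hpR₀) quasilocalWithMaxIdeal_localizeUnits
      (hΓ ▸ hcardR), ?_, hRS, hΓ, ⟨x, hxS, Ideal.Quotient.eq.mpr hxu⟩,
    fun huJ i hsub => hxQ i (hsub ⟨by simpa using J.add_mem hxu huJ, hxS⟩),
    fun s hs => hS.mem_span_singleton_iff hAss hpm (hRS hpR₀) hs⟩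
  exact Set.infinite_of_injective_forall_mem
    (pow_injective_of_mem_nonZeroDivisors hpreg ((mem_maximalIdeal p).mp hpm))
    fun n => pow_mem (hRS hpR₀) n

/-- **Lemma 7.** Coset-hitting lemma: given a `p`ca subring `R` with `pT ∩ R = pR` and an
ideal `J ⊄ Qᵢ`, there is an infinite `p`ca subring `S ⊇ R` with `Γ(S) = Γ(R)` hitting the
coset `u + J`, with `S ∩ J ⊄ Qᵢ` when `u ∈ J`, and with `pT ∩ S = pS`. -/
theorem statement4
    {T : Type u} [CommRing T] [IsLocalRing T] [IsNoetherianRing T]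
    [IsAdicComplete (IsLocalRing.maximalIdeal T) T]
    {k : ℕ} (hk : 0 < k) (Q : Fin k → Ideal T)
    (hQprime : ∀ i, (Q i).IsPrime)
    (hQnonmax : ∀ i, Q i ≠ IsLocalRing.maximalIdeal T)
    (hQinc : ∀ i j, Q i ≤ Q j → Q i = Q j)
    (p : T) (hp0 : p ≠ 0) (hpreg : p ∈ nonZeroDivisors T) (hpQ : ∀ i, p ∈ Q i)
    (hdim : 1 ≤ ringKrullDim T)
    (hAss : ∀ P ∈ associatedPrimes T (T ⧸ Ideal.span {p}), ∀ x ∈ P, ∃ i, x ∈ Q i)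
    (R : Subring T) (hR : IsPcaSubring Q p R)
    (hpR : ∀ x ∈ R, x ∈ Ideal.span {p} ↔ ∃ r ∈ R, x = p * r)
    (J : Ideal T) (hJ : ∀ i, ¬ J ≤ Q i) (u : T) :
    ∃ S : Subring T, IsPcaSubring Q p S ∧ (S : Set T).Infinite ∧
      R ≤ S ∧ Gamma ↥S = Gamma ↥R ∧
      (∃ s ∈ S, Ideal.Quotient.mk J s = Ideal.Quotient.mk J u) ∧
      (u ∈ J → ∀ i, ¬ ((J : Set T) ∩ (S : Set T) ⊆ (Q i : Set T))) ∧
      (∀ x ∈ S, x ∈ Ideal.span {p} ↔ ∃ s ∈ S, x = p * s) :=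
  statement4_general hk Q hQprime hQnonmax hQinc p hpreg hpQ hAss R hR hpR J hJ u
end

section
/- Let Π denote the prime subring of T. Suppose A ⊆ T is a local (Noetherian quasilocal) domain with p ∈ A such that the inclusion A ⊆ T induces an isomorphism of the (A ∩ 𝔪)-adic completion of A with T, pA is a prime ideal of A, Qᵢ ∩ A = pA for every i, and every prime ideal Q of T with Q ∩ A = pA satisfies Q ⊆ Qᵢ for some i ∈ {1, …, k}. Then P ∩ Π[p] = (0) for every associated prime P of T. -/
universe u

/-!
Since `T ≅ Â` is flat over the Noetherian domain `A`, every nonzero element of `A` is a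
nonzerodivisor on `T`, whereas an associated prime of `T` consists of zerodivisors. So each
associated prime meets `A`, and hence `Π[p] ⊆ A`, only in `0`.
-/

theorem IsAssociatedPrime.notMem_of_isSMulRegular {R M : Type*} [CommRing R] [AddCommGroup M]
    [Module R M] {P : Ideal R} (hP : IsAssociatedPrime P M) {x : R} (hx : IsSMulRegular M x) :
    x ∉ P := by
  obtain ⟨hPprime, m, rfl⟩ := hP
  rintro ⟨n, hn⟩
  have hm : m = 0 := (hx.pow n).right_eq_zero_of_smul (by simpa using hn)
  refine hPprime.ne_top (Ideal.eq_top_iff_one _ |>.mpr (Ideal.le_radical ?_))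
  simp [Submodule.mem_colon_singleton, hm]

theorem RingEquiv.isSMulRegular_apply {R S : Type*} [CommRing R] [CommRing S] (e : R ≃+* S)
    {x : R} (hx : IsSMulRegular R x) : IsSMulRegular S (e x) := fun y z h ↦
  e.symm.injective <| hx <| by simpa [smul_eq_mul] using congrArg e.symm h

theorem AdicCompletion.isSMulRegular_algebraMap {R : Type*} [CommRing R] [IsNoetherianRing R]
    [IsDomain R] (I : Ideal R) {a : R} (ha : a ≠ 0) :
    IsSMulRegular (AdicCompletion I R) (algebraMap R (AdicCompletion I R) a) :=
  (IsSMulRegular.of_ne_zero ha).of_flat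

theorem statement9_general
    {T : Type u} [CommRing T] [IsLocalRing T]
    (p : T)
    (A : Subring T) (hpA : p ∈ A)
    (hANoeth : IsNoetherianRing ↥A) (hAdom : IsDomain ↥A)
    (φ : AdicCompletion ((IsLocalRing.maximalIdeal T).comap A.subtype) ↥A ≃+* T)
    (hφ : ∀ a : ↥A,
      φ (algebraMap ↥A (AdicCompletion ((IsLocalRing.maximalIdeal T).comap A.subtype) ↥A) a)
        = (a : T))
    :
    (∀ P ∈ associatedPrimes T T, ∀ x ∈ Subring.closure ({p} : Set T), x ∈ P → x = 0) := by
  intro P hP x hx hxP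
  by_contra hx0
  have hxA : x ∈ A := Subring.closure_le.mpr (Set.singleton_subset_iff.mpr hpA) hx
  have hreg : IsSMulRegular T x := by
    simpa [hφ] using φ.isSMulRegular_apply
      (AdicCompletion.isSMulRegular_algebraMap _ (a := ⟨x, hxA⟩) (by simpa using hx0))
  exact hP.notMem_of_isSMulRegular hreg hxP

/-- **Theorem 11, necessity (a).** If `Â = T` and `pA` is prime with semilocal formal
fiber having maximal ideals the elements of `C`, then `P ∩ Π[p] = (0)` for every
associated prime `P` of `T`. -/
theorem statement9
    {T : Type u} [CommRing T] [IsLocalRing T] [IsNoetherianRing T]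
    [IsAdicComplete (IsLocalRing.maximalIdeal T) T]
    {k : ℕ} (hk : 0 < k) (Q : Fin k → Ideal T)
    (hQprime : ∀ i, (Q i).IsPrime)
    (hQnonmax : ∀ i, Q i ≠ IsLocalRing.maximalIdeal T)
    (hQinc : ∀ i j, Q i ≤ Q j → Q i = Q j)
    (p : T) (hp0 : p ≠ 0) (hpQ : ∀ i, p ∈ Q i)
    (A : Subring T) (hpA : p ∈ A)
    (hANoeth : IsNoetherianRing ↥A) (hAdom : IsDomain ↥A)
    (hAql : QuasilocalWithMaxIdeal A)
    (φ : AdicCompletion ((IsLocalRing.maximalIdeal T).comap A.subtype) ↥A ≃+* T)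
    (hφ : ∀ a : ↥A,
      φ (algebraMap ↥A (AdicCompletion ((IsLocalRing.maximalIdeal T).comap A.subtype) ↥A) a)
        = (a : T))
    (hpAprime : (Ideal.span {(⟨p, hpA⟩ : ↥A)}).IsPrime)
    (hQA : ∀ i, (Q i).comap A.subtype = Ideal.span {(⟨p, hpA⟩ : ↥A)})
    (hfiber : ∀ Q' : Ideal T, Q'.IsPrime →
      Q'.comap A.subtype = Ideal.span {(⟨p, hpA⟩ : ↥A)} → ∃ i, Q' ≤ Q i)
    :
    (∀ P ∈ associatedPrimes T T, ∀ x ∈ Subring.closure ({p} : Set T), x ∈ P → x = 0) :=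
  statement9_general p A hpA hANoeth hAdom φ hφ
end

section
/- Suppose A ⊆ T is a local (Noetherian quasilocal) domain with p ∈ A such that the inclusion A ⊆ T induces an isomorphism of the (A ∩ 𝔪)-adic completion of A with T, pA is a prime ideal of A, Qᵢ ∩ A = pA for every i, and every prime ideal Q of T with Q ∩ A = pA satisfies Q ⊆ Qᵢ for some i ∈ {1, …, k}. Then every associated prime P' of the T-module T/pT satisfies P' ⊆ Qᵢ for some i ∈ {1, …, k}. -/
universe u

/-! `T` is flat over `A`, being its completion. Let `P` be the radical of the annihilator of
`t̄ ∈ T/pT`. If some `a ∈ (P ∩ A) \ pA`, then a power `aⁿ` kills `t̄`; but `aⁿ ∉ pA` is a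
nonzerodivisor on the domain `A/pA`, hence by flatness on `T/pT ≅ T ⊗_A A/pA`, so `t̄ = 0`
and `P = T`. Thus `P ∩ A = pA`, and the hypothesis on the formal fiber puts `P` inside
some `Qᵢ`. -/

section

variable {R S : Type*} [CommRing R] [CommRing S] [Algebra R S]

lemma Ideal.isSMulRegular_quotient_of_notMem {I : Ideal R} [I.IsPrime] {a : R} (ha : a ∉ I) :
    IsSMulRegular (R ⧸ I) a := fun _ _ h =>
  mul_left_cancel₀ (Ideal.Quotient.eq_zero_iff_mem.not.mpr ha) h

lemma IsSMulRegular.quotient_map_of_flat [Module.Flat R S] {I : Ideal R} {a : R}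
    (h : IsSMulRegular (R ⧸ I) a) : IsSMulRegular (S ⧸ I.map (algebraMap R S)) a :=
  ((Algebra.TensorProduct.quotIdealMapEquivTensorQuot S I).toLinearEquiv.restrictScalars R
    |>.isSMulRegular_congr a).mpr (h.lTensor S)

theorem Module.Flat.comap_eq_of_mem_associatedPrimes_quotient_map [Module.Flat R S]
    {I : Ideal R} [I.IsPrime] {P : Ideal S}
    (hP : P ∈ associatedPrimes S (S ⧸ I.map (algebraMap R S))) :
    P.comap (algebraMap R S) = I := by
  obtain ⟨hPprime, x, rfl⟩ := hP
  refine le_antisymm (fun a ha => ?_) (fun a ha => ?_)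
  · obtain ⟨n, hn⟩ := ha
    by_contra haI
    have hreg : IsSMulRegular (S ⧸ I.map (algebraMap R S)) (a ^ n) :=
      (Ideal.isSMulRegular_quotient_of_notMem
        (mt (‹I.IsPrime›.mem_of_pow_mem n) haI)).quotient_map_of_flat
    have hx : x = 0 := hreg.right_eq_zero_of_smul <| by
      rw [← algebraMap_smul S, map_pow, ← Submodule.mem_bot S, ← Submodule.mem_colon_singleton]
      exact hn
    subst hx
    apply hPprime.ne_top
    simp
  · obtain ⟨s, rfl⟩ := Ideal.Quotient.mk_surjective x
    refine Ideal.le_radical (Submodule.mem_colon_singleton.mpr ?_)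
    rw [Submodule.mem_bot, ← Ideal.Quotient.mk_eq_mk, ← Submodule.Quotient.mk_smul,
      Submodule.Quotient.mk_eq_zero]
    exact Ideal.mul_mem_right _ _ (Ideal.mem_map_of_mem _ ha)

theorem Module.Flat.of_ringEquiv_adicCompletion [IsNoetherianRing R] (I : Ideal R)
    (φ : AdicCompletion I R ≃+* S) (hφ : ∀ r, φ (algebraMap R _ r) = algebraMap R S r) :
    Module.Flat R S :=
  .of_linearEquiv (AlgEquiv.ofRingEquiv hφ).toLinearEquiv.symm

end

theorem statement10_general
    {T : Type u} [CommRing T] [IsLocalRing T]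
    {k : ℕ} (Q : Fin k → Ideal T)
    (p : T)
    (A : Subring T) (hpA : p ∈ A)
    (hANoeth : IsNoetherianRing ↥A)
    (φ : AdicCompletion ((IsLocalRing.maximalIdeal T).comap A.subtype) ↥A ≃+* T)
    (hφ : ∀ a : ↥A,
      φ (algebraMap ↥A (AdicCompletion ((IsLocalRing.maximalIdeal T).comap A.subtype) ↥A) a)
        = (a : T))
    (hpAprime : (Ideal.span {(⟨p, hpA⟩ : ↥A)}).IsPrime)
    (hfiber : ∀ Q' : Ideal T, Q'.IsPrime →
      Q'.comap A.subtype = Ideal.span {(⟨p, hpA⟩ : ↥A)} → ∃ i, Q' ≤ Q i)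
    :
    (∀ P ∈ associatedPrimes T (T ⧸ Ideal.span {p}), ∃ i, P ≤ Q i) := by
  have := hANoeth
  have : Module.Flat A T := .of_ringEquiv_adicCompletion _ φ hφ
  intro P hP
  apply hfiber P hP.isPrime
  apply Module.Flat.comap_eq_of_mem_associatedPrimes_quotient_map
  rwa [Ideal.map_span, Set.image_singleton]

/-- **Theorem 11, necessity (b).** If `Â = T` and `pA` is prime with semilocal formal
fiber having maximal ideals the elements of `C`, then every associated prime of `T/pT`
is contained in some `Qᵢ`. -/
theorem statement10
    {T : Type u} [CommRing T] [IsLocalRing T] [IsNoetherianRing T]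
    [IsAdicComplete (IsLocalRing.maximalIdeal T) T]
    {k : ℕ} (hk : 0 < k) (Q : Fin k → Ideal T)
    (hQprime : ∀ i, (Q i).IsPrime)
    (hQnonmax : ∀ i, Q i ≠ IsLocalRing.maximalIdeal T)
    (hQinc : ∀ i j, Q i ≤ Q j → Q i = Q j)
    (p : T) (hp0 : p ≠ 0) (hpQ : ∀ i, p ∈ Q i)
    (A : Subring T) (hpA : p ∈ A)
    (hANoeth : IsNoetherianRing ↥A) (hAdom : IsDomain ↥A)
    (hAql : QuasilocalWithMaxIdeal A)
    (φ : AdicCompletion ((IsLocalRing.maximalIdeal T).comap A.subtype) ↥A ≃+* T)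
    (hφ : ∀ a : ↥A,
      φ (algebraMap ↥A (AdicCompletion ((IsLocalRing.maximalIdeal T).comap A.subtype) ↥A) a)
        = (a : T))
    (hpAprime : (Ideal.span {(⟨p, hpA⟩ : ↥A)}).IsPrime)
    (hQA : ∀ i, (Q i).comap A.subtype = Ideal.span {(⟨p, hpA⟩ : ↥A)})
    (hfiber : ∀ Q' : Ideal T, Q'.IsPrime →
      Q'.comap A.subtype = Ideal.span {(⟨p, hpA⟩ : ↥A)} → ∃ i, Q' ≤ Q i)
    :
    (∀ P ∈ associatedPrimes T (T ⧸ Ideal.span {p}), ∃ i, P ≤ Q i) :=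
  statement10_general Q p A hpA hANoeth φ hφ hpAprime hfiber
end

section
/- Let Π denote the prime subring of T. Suppose A ⊆ T is a local (Noetherian quasilocal) domain with p ∈ A such that the inclusion A ⊆ T induces an isomorphism of the (A ∩ 𝔪)-adic completion of A with T, pA is a prime ideal of A, Qᵢ ∩ A = pA for every i, and every prime ideal Q of T with Q ∩ A = pA satisfies Q ⊆ Qᵢ for some i ∈ {1, …, k}. Then ((Qᵢ \ pT)Π[p]) ∩ Π[p] = {0} for all i ∈ {1, …, k}. -/
/-!
Since `Π[p] ⊆ A` and `T ≅ Â` is flat over `A`, the `A`-regular sequence `p, b` (for `p ≠ 0` and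
`b ∉ pA`, with `pA` prime) stays regular on `T`: `p` is a nonzerodivisor on `T` and `b` one on
`T/pT`. If `t = qr ≠ 0` with `q ∈ Qᵢ \ pT` and `r, t ∈ A`, write `t = pⁿa`, `r = pᵐb` with
`a, b ∉ pA` (divisibility by `p` terminates in the Noetherian domain `A`). Cancelling powers
of `p` in `q pᵐ b = pⁿ a` gives either `a = q pᵐ⁻ⁿ b ∈ Qᵢ ∩ A = pA` (if `n ≤ m`) or
`qb ∈ pT`, hence `q ∈ pT` (if `n > m`), both impossible.
-/

universe u

open RingTheory.Sequence

theorem Module.Flat.of_ringEquiv_adicCompletion_s11 {A T : Type*} [CommRing A] [IsNoetherianRing A]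
    [CommRing T] [Algebra A T] (I : Ideal A) (φ : AdicCompletion I A ≃+* T)
    (hφ : ∀ a, φ (algebraMap A (AdicCompletion I A) a) = algebraMap A T a) :
    Module.Flat A T :=
  have := AdicCompletion.flat_of_isNoetherian I (R := A)
  .of_linearEquiv (AlgEquiv.ofRingEquiv hφ).toLinearEquiv.symm

open scoped Pointwise in
theorem isWeaklyRegular_pair_iff {S : Type*} [CommRing S] (x y : S) :
    IsWeaklyRegular S [x, y] ↔
      IsSMulRegular S x ∧ ∀ z, y * z ∈ Ideal.span {x} → z ∈ Ideal.span {x} := by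
  have hspan : x • (⊤ : Submodule S S) = Ideal.span {x} := by
    rw [← Submodule.ideal_span_singleton_smul, smul_eq_mul, Ideal.mul_top]
  simp only [isWeaklyRegular_cons_iff, IsWeaklyRegular.nil, and_true,
    isSMulRegular_quotient_iff_mem_of_smul_mem, hspan, smul_eq_mul]

theorem isWeaklyRegular_pair_of_span_isPrime {A : Type*} [CommRing A] [IsDomain A] {p b : A}
    (hp : p ≠ 0) (hprime : (Ideal.span {p}).IsPrime) (hb : b ∉ Ideal.span {p}) :
    IsWeaklyRegular A [p, b] :=
  (isWeaklyRegular_pair_iff p b).2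
    ⟨.of_ne_zero hp, fun _ h => (hprime.mem_or_mem h).resolve_left hb⟩

theorem exists_eq_pow_mul_not_mem_span {A : Type*} [CommRing A] [IsDomain A] [IsNoetherianRing A]
    {p : A} (hp : Ideal.span {p} ≠ ⊤) {t : A} (ht : t ≠ 0) :
    ∃ (n : ℕ) (a : A), t = p ^ n * a ∧ a ∉ Ideal.span {p} := by
  obtain ⟨n, a, hpa, rfl⟩ :=
    WfDvdMonoid.max_power_factor' ht (mt Ideal.span_singleton_eq_top.2 hp)
  exact ⟨n, a, rfl, mt Ideal.mem_span_singleton.1 hpa⟩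

theorem mul_algebraMap_ne_algebraMap_of_flat {A S : Type*} [CommRing A] [IsDomain A]
    [IsNoetherianRing A] [CommRing S] [Algebra A S] [Module.Flat A S] {p : A} (hp : p ≠ 0)
    (hprime : (Ideal.span {p}).IsPrime) {Q : Ideal S}
    (hQ : Q.comap (algebraMap A S) = Ideal.span {p}) {q : S} (hqQ : q ∈ Q)
    (hqp : q ∉ Ideal.span {algebraMap A S p}) {r t : A} (hr : r ≠ 0) (ht : t ≠ 0) :
    q * algebraMap A S r ≠ algebraMap A S t := by
  intro h
  obtain ⟨n, a, rfl, ha⟩ := exists_eq_pow_mul_not_mem_span hprime.ne_top ht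
  obtain ⟨m, b, rfl, hb⟩ := exists_eq_pow_mul_not_mem_span hprime.ne_top hr
  obtain ⟨hpS, hbS⟩ := (isWeaklyRegular_pair_iff _ _).1
    ((isWeaklyRegular_pair_of_span_isPrime hp hprime hb).of_flat (S := S))
  simp only [map_mul, map_pow] at h
  set P := algebraMap A S p
  rcases le_or_gt n m with hnm | hmn
  · obtain ⟨k, rfl⟩ := Nat.exists_eq_add_of_le hnm
    have hcancel : q * P ^ k * algebraMap A S b = algebraMap A S a :=
      hpS.pow n (by simp only [smul_eq_mul]; linear_combination h)
    apply ha
    rw [← hQ, Ideal.mem_comap, ← hcancel]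
    exact Q.mul_mem_right _ (Q.mul_mem_right _ hqQ)
  · obtain ⟨k, rfl⟩ := Nat.exists_eq_add_of_lt hmn
    have hcancel : algebraMap A S b * q = P * (P ^ k * algebraMap A S a) :=
      hpS.pow m (by simp only [smul_eq_mul]; linear_combination h)
    exact hqp (hbS q (hcancel ▸ Ideal.mul_mem_right _ _ (Ideal.mem_span_singleton_self P)))

theorem statement11_general
    {T : Type u} [CommRing T] [IsLocalRing T]
    {k : ℕ} (Q : Fin k → Ideal T)
    (p : T) (hp0 : p ≠ 0)
    (A : Subring T) (hpA : p ∈ A)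
    (hANoeth : IsNoetherianRing ↥A) (hAdom : IsDomain ↥A)
    (φ : AdicCompletion ((IsLocalRing.maximalIdeal T).comap A.subtype) ↥A ≃+* T)
    (hφ : ∀ a : ↥A,
      φ (algebraMap ↥A (AdicCompletion ((IsLocalRing.maximalIdeal T).comap A.subtype) ↥A) a)
        = (a : T))
    (hpAprime : (Ideal.span {(⟨p, hpA⟩ : ↥A)}).IsPrime)
    (hQA : ∀ i, (Q i).comap A.subtype = Ideal.span {(⟨p, hpA⟩ : ↥A)})
    :
    (∀ i : Fin k, ∀ t ∈ CompAvoid (Q i) p ((Subring.closure {p} : Subring T) : Set T),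
      t ∈ Subring.closure ({p} : Set T) → t = 0) := by
  have : Module.Flat A T := .of_ringEquiv_adicCompletion _ φ hφ
  have hclosure : Subring.closure {p} ≤ A := Subring.closure_le.2 (Set.singleton_subset_iff.2 hpA)
  rintro i _ ⟨q, hqQ, hqp, r, hr, rfl⟩ hqr
  by_contra hqr0
  have hr0 : r ≠ 0 := by rintro rfl; exact hqr0 (mul_zero q)
  have hpA0 : (⟨p, hpA⟩ : A) ≠ 0 := by simpa using hp0
  have hrA0 : (⟨r, hclosure hr⟩ : A) ≠ 0 := by simpa using hr0
  have htA0 : (⟨q * r, hclosure hqr⟩ : A) ≠ 0 := by simpa using hqr0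
  exact mul_algebraMap_ne_algebraMap_of_flat hpA0 hpAprime (hQA i) hqQ hqp hrA0 htA0 rfl

/-- **Theorem 11, necessity (c).** If `Â = T` and `pA` is prime with semilocal formal
fiber having maximal ideals the elements of `C`, then
`((Qᵢ \ pT)Π[p]) ∩ Π[p] = {0}` for all `i`. -/
theorem statement11
    {T : Type u} [CommRing T] [IsLocalRing T] [IsNoetherianRing T]
    [IsAdicComplete (IsLocalRing.maximalIdeal T) T]
    {k : ℕ} (hk : 0 < k) (Q : Fin k → Ideal T)
    (hQprime : ∀ i, (Q i).IsPrime)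
    (hQnonmax : ∀ i, Q i ≠ IsLocalRing.maximalIdeal T)
    (hQinc : ∀ i j, Q i ≤ Q j → Q i = Q j)
    (p : T) (hp0 : p ≠ 0) (hpQ : ∀ i, p ∈ Q i)
    (A : Subring T) (hpA : p ∈ A)
    (hANoeth : IsNoetherianRing ↥A) (hAdom : IsDomain ↥A)
    (hAql : QuasilocalWithMaxIdeal A)
    (φ : AdicCompletion ((IsLocalRing.maximalIdeal T).comap A.subtype) ↥A ≃+* T)
    (hφ : ∀ a : ↥A,
      φ (algebraMap ↥A (AdicCompletion ((IsLocalRing.maximalIdeal T).comap A.subtype) ↥A) a)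
        = (a : T))
    (hpAprime : (Ideal.span {(⟨p, hpA⟩ : ↥A)}).IsPrime)
    (hQA : ∀ i, (Q i).comap A.subtype = Ideal.span {(⟨p, hpA⟩ : ↥A)})
    (hfiber : ∀ Q' : Ideal T, Q'.IsPrime →
      Q'.comap A.subtype = Ideal.span {(⟨p, hpA⟩ : ↥A)} → ∃ i, Q' ≤ Q i)
    :
    (∀ i : Fin k, ∀ t ∈ CompAvoid (Q i) p ((Subring.closure {p} : Subring T) : Set T),
      t ∈ Subring.closure ({p} : Set T) → t = 0) :=
  statement11_general Q p hp0 A hpA hANoeth hAdom φ hφ hpAprime hQA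
end
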